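/- arXiv:2409.03596 — 4 statements merged into one kernel-verified Lean document; each statement's English description precedes it below -/
import Mathlib

section
/- Let (x_1, x_2, ..., x_n) be a sequence of real numbers and let Π be a uniformly random permutation of {1,...,n}. Define random variables X_i = x_{Π^{-1}(i)} for i ∈ {1,...,n}. Then X_1, X_2, ..., X_n are negatively associated. -/
open MeasureTheory

/-- Real random variables `X i`, `i : ι`, on a common probability space are *negatively
associated* if for every pair of disjoint index sets `A₁ A₂ ⊆ ι` and every pair of
coordinatewise non-decreasing functions `f₁ : ℝ^{A₁} → ℝ`, `f₂ : ℝ^{A₂} → ℝ` (for which the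
expectations exist), `E[f₁ · f₂] ≤ E[f₁] · E[f₂]`. -/
def NegAssoc {Ω ι : Type*} [MeasurableSpace Ω] [Fintype ι] (μ : Measure Ω)
    (X : ι → Ω → ℝ) : Prop :=
  ∀ (A₁ A₂ : Finset ι), Disjoint A₁ A₂ →
    ∀ (f₁ : (A₁ → ℝ) → ℝ) (f₂ : (A₂ → ℝ) → ℝ), Monotone f₁ → Monotone f₂ →
      Integrable (fun ω => f₁ fun i => X i.1 ω) μ →
      Integrable (fun ω => f₂ fun i => X i.1 ω) μ →
      Integrable (fun ω => (f₁ fun i => X i.1 ω) * (f₂ fun i => X i.1 ω)) μ →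
      ∫ ω, (f₁ fun i => X i.1 ω) * (f₂ fun i => X i.1 ω) ∂μ ≤
        (∫ ω, (f₁ fun i => X i.1 ω) ∂μ) * ∫ ω, (f₂ fun i => X i.1 ω) ∂μ

instance {n : ℕ} : MeasurableSpace (Equiv.Perm (Fin n)) := ⊤

/-- The uniform probability distribution on the (finite, nonempty) set of all permutations
of `{1, …, n}`. -/
noncomputable def uniformPermMeasure (n : ℕ) : Measure (Equiv.Perm (Fin n)) :=
  (Fintype.card (Equiv.Perm (Fin n)) : ENNReal)⁻¹ • Measure.count

section aux
set_option linter.unusedSectionVars false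
open Finset

section helpers

variable {α β : Type*} [DecidableEq α] [DecidableEq β]

/-- restriction of `swap k k'` to an equiv between complements of points. -/
def swapRes (k k' : α) : {i : α // i ≠ k} ≃ {i : α // i ≠ k'} :=
  (Equiv.swap k k').subtypeEquiv fun i => by
    constructor
    · intro h hc
      exact h ((Equiv.swap k k').injective (hc.trans (Equiv.swap_apply_left k k').symm))
    · intro h hc
      exact h (hc ▸ Equiv.swap_apply_left k k')

lemma swapRes_apply (k k' : α) (i : {i : α // i ≠ k}) (h2 : i.1 ≠ k') :
    (swapRes k k' i).1 = i.1 := by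
  simp [swapRes, Equiv.swap_apply_of_ne_of_ne i.2 h2]

lemma swapRes_symm (k k' : α) : (swapRes k k').symm = swapRes k' k := by
  apply Equiv.ext; intro j
  rw [Equiv.symm_apply_eq]
  apply Subtype.ext
  show j.1 = Equiv.swap k k' (Equiv.swap k' k j.1)
  rw [Equiv.swap_comm k k', Equiv.swap_apply_self]

lemma swapRes_symm_apply (k k' : α) (i : {i : α // i ≠ k'}) (h1 : i.1 ≠ k) :
    ((swapRes k k').symm i).1 = i.1 := by
  rw [swapRes_symm]; exact swapRes_apply k' k i h1

/-- restriction of an equiv `e` with `e k = m` to the complements. -/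
def resEquiv (e : α ≃ β) (k : α) (m : β) (hk : e k = m) :
    {i : α // i ≠ k} ≃ {j : β // j ≠ m} :=
  e.subtypeEquiv fun i => by rw [ne_eq, ne_eq, ← hk, Equiv.apply_eq_iff_eq]

lemma resEquiv_apply (e : α ≃ β) (k : α) (m : β) (hk : e k = m) (i : {i : α // i ≠ k}) :
    (resEquiv e k m hk i).1 = e i.1 := rfl

/-- extend an equiv of complements by `k ↦ m`. -/
def extEquiv (k : α) (m : β) (e' : {i : α // i ≠ k} ≃ {j : β // j ≠ m}) : α ≃ β where
  toFun i := if h : i = k then m else (e' ⟨i, h⟩).1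
  invFun j := if h : j = m then k else (e'.symm ⟨j, h⟩).1
  left_inv i := by
    by_cases h : i = k
    · simp [h]
    · simp only [dif_neg h, dif_neg (e' ⟨i, h⟩).2, Subtype.coe_eta, Equiv.symm_apply_apply]
  right_inv j := by
    by_cases h : j = m
    · simp [h]
    · simp only [dif_neg h, dif_neg (e'.symm ⟨j, h⟩).2, Subtype.coe_eta,
        Equiv.apply_symm_apply]

lemma extEquiv_apply_self (k : α) (m : β) (e' : {i : α // i ≠ k} ≃ {j : β // j ≠ m}) :
    extEquiv k m e' k = m := dif_pos rfl

lemma extEquiv_apply_ne (k : α) (m : β) (e' : {i : α // i ≠ k} ≃ {j : β // j ≠ m})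
    {i : α} (h : i ≠ k) : extEquiv k m e' i = (e' ⟨i, h⟩).1 := dif_neg h

lemma ext_res (e : α ≃ β) (k : α) (m : β) (h : e k = m) :
    extEquiv k m (resEquiv e k m h) = e := by
  apply Equiv.ext; intro i
  by_cases hik : i = k
  · rw [hik, extEquiv_apply_self, h]
  · rw [extEquiv_apply_ne k m _ hik, resEquiv_apply]

lemma res_ext (k : α) (m : β) (e' : {i : α // i ≠ k} ≃ {j : β // j ≠ m})
    (h : extEquiv k m e' k = m) :
    resEquiv (extEquiv k m e') k m h = e' := by
  apply Equiv.ext; rintro ⟨i, hi⟩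
  apply Subtype.ext
  rw [resEquiv_apply, extEquiv_apply_ne k m e' hi]

/-- decomposition of a sum over equivs by the preimage of a fixed point `m`. -/
lemma sum_equiv_decomp [Fintype α] [Fintype β] (m : β) (H : (α ≃ β) → ℝ) :
    ∑ e : α ≃ β, H e
      = ∑ k : α, ∑ e' : {i : α // i ≠ k} ≃ {j : β // j ≠ m}, H (extEquiv k m e') := by
  rw [← Finset.sum_fiberwise Finset.univ (fun e : α ≃ β => e.symm m) H]
  refine Finset.sum_congr rfl fun k _ => ?_
  refine Finset.sum_bij' (fun e he => resEquiv e k m ?_) (fun e' _ => extEquiv k m e')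
    (fun _ _ => mem_univ _) (fun e' _ => ?_) (fun e he => ext_res e k m _)
    (fun e' _ => res_ext k m e' _) (fun e he => ?_)
  · have := (Finset.mem_filter.mp he).2
    rw [← this, Equiv.apply_symm_apply]
  · simp only [Finset.mem_filter, Finset.mem_univ, true_and]
    rw [Equiv.symm_apply_eq, extEquiv_apply_self]
  · exact congrArg H (ext_res e k m _).symm

end helpers
open Finset

lemma cheb {K : Type*} [Fintype K] (A₁ A₂ : Finset K) (hd : Disjoint A₁ A₂)
    (φ₁ φ₂ : K → ℝ) (c₁ c₂ : ℝ)
    (h1e : ∀ k ∉ A₁, φ₁ k = c₁) (h2e : ∀ k ∉ A₂, φ₂ k = c₂)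
    (h1 : ∀ k, c₁ ≤ φ₁ k) (h2 : ∀ k, c₂ ≤ φ₂ k) :
    (Fintype.card K : ℝ) * ∑ k, φ₁ k * φ₂ k ≤ (∑ k, φ₁ k) * ∑ k, φ₂ k := by
  have hz : ∀ k ∈ Finset.univ (α := K), (φ₁ k - c₁) * (φ₂ k - c₂) = 0 := by
    intro k _
    by_cases h : k ∈ A₁
    · rw [h2e k (Finset.disjoint_left.mp hd h)]; ring
    · rw [h1e k h]; ring
  have hsum : ∑ k, (φ₁ k - c₁) * (φ₂ k - c₂) = 0 := Finset.sum_eq_zero hz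
  have hexp : ∑ k, (φ₁ k - c₁) * (φ₂ k - c₂)
      = ∑ k, φ₁ k * φ₂ k - c₂ * ∑ k, φ₁ k - c₁ * ∑ k, φ₂ k
        + (Fintype.card K : ℝ) * (c₁ * c₂) := by
    rw [Finset.sum_congr rfl (fun k _ => show (φ₁ k - c₁) * (φ₂ k - c₂)
        = φ₁ k * φ₂ k - c₂ * φ₁ k - c₁ * φ₂ k + c₁ * c₂ from by ring)]
    rw [Finset.sum_add_distrib, Finset.sum_sub_distrib, Finset.sum_sub_distrib,
      ← Finset.mul_sum, ← Finset.mul_sum, Finset.sum_const, Finset.card_univ,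
      nsmul_eq_mul]
  have hkey : ∑ k, φ₁ k * φ₂ k
      = c₂ * ∑ k, φ₁ k + c₁ * ∑ k, φ₂ k - (Fintype.card K : ℝ) * (c₁ * c₂) := by
    rw [hexp] at hsum; linarith
  have hS1 : (Fintype.card K : ℝ) * c₁ ≤ ∑ k, φ₁ k := by
    have := Finset.card_nsmul_le_sum Finset.univ φ₁ c₁ (fun k _ => h1 k)
    rwa [Finset.card_univ, nsmul_eq_mul] at this
  have hS2 : (Fintype.card K : ℝ) * c₂ ≤ ∑ k, φ₂ k := by
    have := Finset.card_nsmul_le_sum Finset.univ φ₂ c₂ (fun k _ => h2 k)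
    rwa [Finset.card_univ, nsmul_eq_mul] at this
  nlinarith [mul_nonneg (sub_nonneg.2 hS1) (sub_nonneg.2 hS2)]

lemma const_right {ι : Type*} [Fintype ι] (F G : ι → ℝ) (c : ℝ) (hG : ∀ i, G i = c) :
    (Fintype.card ι : ℝ) * ∑ i, F i * G i ≤ (∑ i, F i) * ∑ i, G i := by
  apply le_of_eq
  simp_rw [hG]
  rw [← Finset.sum_mul, Finset.sum_const, Finset.card_univ, nsmul_eq_mul]
  ring

lemma const_left {ι : Type*} [Fintype ι] (F G : ι → ℝ) (c : ℝ) (hF : ∀ i, F i = c) :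
    (Fintype.card ι : ℝ) * ∑ i, F i * G i ≤ (∑ i, F i) * ∑ i, G i := by
  apply le_of_eq
  simp_rw [hF]
  rw [← Finset.mul_sum, Finset.sum_const, Finset.card_univ, nsmul_eq_mul]
  ring

section main

variable {α β : Type*} [DecidableEq α] [DecidableEq β]

/-- The modified monotone function obtained by fixing the value `x m` at coordinate `k`. -/
def modFun (x : β → ℝ) (m : β) (A : Finset α) (k : α) (f : (A → ℝ) → ℝ) :
    ((A.subtype fun i => i ≠ k) → ℝ) → ℝ :=
  fun g => f fun i => if h : i.1 = k then x m else g ⟨⟨i.1, h⟩, Finset.mem_subtype.mpr i.2⟩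

lemma modFun_monotone (x : β → ℝ) (m : β) (A : Finset α) (k : α) (f : (A → ℝ) → ℝ)
    (hf : Monotone f) : Monotone (modFun x m A k f) := by
  intro g g' hg
  refine hf fun i => ?_
  dsimp only [modFun]
  split_ifs
  · exact le_rfl
  · exact hg _

lemma modFun_spec (x : β → ℝ) (m : β) (A : Finset α) (k : α) (f : (A → ℝ) → ℝ)
    (e' : {i : α // i ≠ k} ≃ {j : β // j ≠ m}) :
    (f fun i => x ((extEquiv k m e') i.1)) = modFun x m A k f fun i => x (e' i.1).1 := by
  apply congrArg f
  funext i
  dsimp only [modFun]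
  by_cases h : i.1 = k
  · rw [dif_pos h, h, extEquiv_apply_self]
  · rw [dif_neg h, extEquiv_apply_ne k m e' h]

lemma modFun_sum_le [Fintype α] [Fintype β] (x : β → ℝ) (m : β) (hm : ∀ b, x b ≤ x m)
    (A : Finset α) (f : (A → ℝ) → ℝ) (hf : Monotone f)
    {k₀ : α} (hk₀ : k₀ ∉ A) (k : α) :
    ∑ e' : {i : α // i ≠ k₀} ≃ {j : β // j ≠ m}, modFun x m A k₀ f (fun i => x (e' i.1).1)
      ≤ ∑ e' : {i : α // i ≠ k} ≃ {j : β // j ≠ m},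
          modFun x m A k f (fun i => x (e' i.1).1) := by
  rw [Fintype.sum_equiv ((swapRes k₀ k).equivCongr (Equiv.refl {j : β // j ≠ m})).symm
    (fun e' : {i : α // i ≠ k} ≃ {j : β // j ≠ m} => modFun x m A k f (fun i => x (e' i.1).1))
    (fun e'' => modFun x m A k f
      (fun i => x ((((swapRes k₀ k).equivCongr (Equiv.refl _)) e'' i.1)).1))
    (fun e' => by simp only [Equiv.apply_symm_apply])]
  refine Finset.sum_le_sum fun e'' _ => ?_
  refine hf fun i => ?_
  dsimp only [modFun]
  have hi₀ : i.1 ≠ k₀ := fun hh => hk₀ (hh ▸ i.2)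
  rw [dif_neg hi₀]
  by_cases h : i.1 = k
  · rw [dif_pos h]
    exact hm _
  · rw [dif_neg h]
    apply le_of_eq
    have hsub : ((swapRes k₀ k).symm ⟨i.1, h⟩ : {i : α // i ≠ k₀}) = ⟨i.1, hi₀⟩ :=
      Subtype.ext (swapRes_symm_apply k₀ k ⟨i.1, h⟩ hi₀)
    rw [Equiv.equivCongr_apply_apply, Equiv.refl_apply, hsub]

lemma key_lemma (N : ℕ) :
    ∀ (α β : Type) [Fintype α] [DecidableEq α] [Fintype β] [DecidableEq β],
    Fintype.card α = N → Fintype.card β = N →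
    ∀ (x : β → ℝ) (A₁ A₂ : Finset α), Disjoint A₁ A₂ →
    ∀ (f₁ : (A₁ → ℝ) → ℝ) (f₂ : (A₂ → ℝ) → ℝ), Monotone f₁ → Monotone f₂ →
    (Fintype.card (α ≃ β) : ℝ) *
        ∑ e : α ≃ β, (f₁ fun i => x (e i.1)) * (f₂ fun i => x (e i.1)) ≤
      (∑ e : α ≃ β, f₁ fun i => x (e i.1)) * ∑ e : α ≃ β, f₂ fun i => x (e i.1) := by
  induction N with
  | zero =>
    intro α β _ _ _ _ hα hβ x A₁ A₂ hd f₁ f₂ hf₁ hf₂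
    haveI : IsEmpty α := Fintype.card_eq_zero_iff.mp hα
    exact const_right _ _ (f₂ fun i => (IsEmpty.false i.1).elim)
      (fun e => congrArg f₂ (funext fun i => (IsEmpty.false i.1).elim))
  | succ N IH =>
    intro α β _ _ _ _ hα hβ x A₁ A₂ hd f₁ f₂ hf₁ hf₂
    rcases Finset.eq_empty_or_nonempty A₁ with hA₁ | hA₁ne
    · exact const_left _ _ (f₁ fun i => (0:ℝ))
        (fun e => congrArg f₁ (funext fun i => absurd (hA₁ ▸ i.2 : i.1 ∈ (∅ : Finset α)) (Finset.notMem_empty _)))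
    rcases Finset.eq_empty_or_nonempty A₂ with hA₂ | hA₂ne
    · exact const_right _ _ (f₂ fun i => (0:ℝ))
        (fun e => congrArg f₂ (funext fun i => absurd (hA₂ ▸ i.2 : i.1 ∈ (∅ : Finset α)) (Finset.notMem_empty _)))
    obtain ⟨k₁, hk₁⟩ := hA₁ne
    obtain ⟨k₀, hk₀⟩ := hA₂ne
    have hk₀A₁ : k₀ ∉ A₁ := Finset.disjoint_right.mp hd hk₀
    have hk₁A₂ : k₁ ∉ A₂ := Finset.disjoint_left.mp hd hk₁
    haveI hβne : Nonempty β := Fintype.card_pos_iff.mp (by omega)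
    obtain ⟨m, -, hm'⟩ := Finset.exists_max_image Finset.univ x Finset.univ_nonempty
    have hm : ∀ b, x b ≤ x m := fun b => hm' b (Finset.mem_univ b)
    -- cardinalities
    have cardα' : ∀ k : α, Fintype.card {i : α // i ≠ k} = N := by
      intro k
      have h1 : Fintype.card {i : α // ¬ i = k}
          = Fintype.card α - Fintype.card {i : α // i = k} := Fintype.card_subtype_compl _
      rw [Fintype.card_subtype_eq, hα] at h1
      exact h1
    have cardβ' : Fintype.card {j : β // j ≠ m} = N := by
      have h1 : Fintype.card {j : β // ¬ j = m}
          = Fintype.card β - Fintype.card {j : β // j = m} := Fintype.card_subtype_compl _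
      rw [Fintype.card_subtype_eq, hβ] at h1
      exact h1
    have hCk : ∀ k : α, ((Fintype.card ({i : α // i ≠ k} ≃ {j : β // j ≠ m})) : ℝ)
        = (N.factorial : ℝ) := by
      intro k
      rw [Fintype.card_equiv (Fintype.equivOfCardEq ((cardα' k).trans cardβ'.symm)), cardα' k]
    have hCtot : ((Fintype.card (α ≃ β)) : ℝ) = (N + 1 : ℝ) * (N.factorial : ℝ) := by
      rw [Fintype.card_equiv (Fintype.equivOfCardEq (hα.trans hβ.symm)), hα,
        Nat.factorial_succ]
      push_cast
      ring
    -- disjointness of restricted index sets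
    have hdk : ∀ k : α,
        Disjoint (A₁.subtype fun i => i ≠ k) (A₂.subtype fun i => i ≠ k) := by
      intro k
      rw [Finset.disjoint_left]
      intro a ha hb
      rw [Finset.mem_subtype] at ha hb
      exact Finset.disjoint_left.mp hd ha hb
    -- inner inequality from the induction hypothesis
    have inner : ∀ k : α,
        (Fintype.card ({i : α // i ≠ k} ≃ {j : β // j ≠ m}) : ℝ) *
            ∑ e' : {i : α // i ≠ k} ≃ {j : β // j ≠ m},
              (modFun x m A₁ k f₁ fun i => x (e' i.1).1) *
                (modFun x m A₂ k f₂ fun i => x (e' i.1).1) ≤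
          (∑ e' : {i : α // i ≠ k} ≃ {j : β // j ≠ m},
              modFun x m A₁ k f₁ fun i => x (e' i.1).1) *
            ∑ e' : {i : α // i ≠ k} ≃ {j : β // j ≠ m},
              modFun x m A₂ k f₂ fun i => x (e' i.1).1 := by
      intro k
      exact IH {i : α // i ≠ k} {j : β // j ≠ m} (cardα' k) cardβ'
        (fun j => x j.1) (A₁.subtype fun i => i ≠ k) (A₂.subtype fun i => i ≠ k) (hdk k)
        (modFun x m A₁ k f₁) (modFun x m A₂ k f₂)
        (modFun_monotone x m A₁ k f₁ hf₁) (modFun_monotone x m A₂ k f₂ hf₂)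
    -- rewrite goal via the decomposition
    rw [sum_equiv_decomp m (fun e : α ≃ β =>
        (f₁ fun i => x (e i.1)) * (f₂ fun i => x (e i.1))),
      sum_equiv_decomp m (fun e : α ≃ β => f₁ fun i => x (e i.1)),
      sum_equiv_decomp m (fun e : α ≃ β => f₂ fun i => x (e i.1))]
    simp only [modFun_spec x m A₁ _ f₁, modFun_spec x m A₂ _ f₂]
    -- the marginal sums
    set φ₁ : α → ℝ := fun k => ∑ e' : {i : α // i ≠ k} ≃ {j : β // j ≠ m},
      modFun x m A₁ k f₁ fun i => x (e' i.1).1 with hφ₁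
    set φ₂ : α → ℝ := fun k => ∑ e' : {i : α // i ≠ k} ≃ {j : β // j ≠ m},
      modFun x m A₂ k f₂ fun i => x (e' i.1).1 with hφ₂
    have mono₁ : ∀ k, φ₁ k₀ ≤ φ₁ k := fun k => modFun_sum_le x m hm A₁ f₁ hf₁ hk₀A₁ k
    have mono₂ : ∀ k, φ₂ k₁ ≤ φ₂ k := fun k => modFun_sum_le x m hm A₂ f₂ hf₂ hk₁A₂ k
    have h1e : ∀ k ∉ A₁, φ₁ k = φ₁ k₀ := fun k hk =>
      le_antisymm (modFun_sum_le x m hm A₁ f₁ hf₁ hk k₀) (mono₁ k)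
    have h2e : ∀ k ∉ A₂, φ₂ k = φ₂ k₁ := fun k hk =>
      le_antisymm (modFun_sum_le x m hm A₂ f₂ hf₂ hk k₁) (mono₂ k)
    calc (Fintype.card (α ≃ β) : ℝ) * ∑ k : α,
          ∑ e' : {i : α // i ≠ k} ≃ {j : β // j ≠ m},
            (modFun x m A₁ k f₁ fun i => x (e' i.1).1) *
              (modFun x m A₂ k f₂ fun i => x (e' i.1).1)
        = (N + 1 : ℝ) * ∑ k : α, ((N.factorial : ℝ) *
            ∑ e' : {i : α // i ≠ k} ≃ {j : β // j ≠ m},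
              (modFun x m A₁ k f₁ fun i => x (e' i.1).1) *
                (modFun x m A₂ k f₂ fun i => x (e' i.1).1)) := by
          rw [hCtot, mul_assoc, Finset.mul_sum]
      _ ≤ (N + 1 : ℝ) * ∑ k : α, φ₁ k * φ₂ k := by
          refine mul_le_mul_of_nonneg_left (Finset.sum_le_sum fun k _ => ?_) (by positivity)
          have h := inner k
          rw [hCk k] at h
          exact h
      _ ≤ (∑ k : α, φ₁ k) * ∑ k : α, φ₂ k := by
          have hcard : (Fintype.card α : ℝ) = (N + 1 : ℝ) := by
            rw [hα]; push_cast; ring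
          rw [← hcard]
          exact cheb A₁ A₂ hd φ₁ φ₂ (φ₁ k₀) (φ₂ k₁) h1e h2e mono₁ mono₂

end main

end aux

instance {n : ℕ} : MeasurableSingletonClass (Equiv.Perm (Fin n)) :=
  ⟨fun _ => MeasurableSpace.measurableSet_top⟩

/-- Given a sequence `x 1, …, x n` of reals and a uniformly random permutation `Π` of
`{1, …, n}`, the random variables `X i = x (Π⁻¹ i)` are negatively associated. -/
theorem negAssoc_of_random_permutation {n : ℕ} (x : Fin n → ℝ) :
    NegAssoc (uniformPermMeasure n) (fun i π => x (π.symm i)) := by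

  intro A₁ A₂ hd f₁ f₂ hf₁ hf₂ h₁ h₂ h₁₂
  have hsingle : ∀ π : Equiv.Perm (Fin n),
      ((uniformPermMeasure n) {π}).toReal
        = ((Fintype.card (Equiv.Perm (Fin n)) : ℝ))⁻¹ := by
    intro π
    rw [uniformPermMeasure, Measure.smul_apply, Measure.count_singleton, smul_eq_mul,
      mul_one, ENNReal.toReal_inv, ENNReal.toReal_natCast]
  have hint : ∀ (g : Equiv.Perm (Fin n) → ℝ), Integrable g (uniformPermMeasure n) →
      ∫ ω, g ω ∂(uniformPermMeasure n)
        = ((Fintype.card (Equiv.Perm (Fin n)) : ℝ))⁻¹ * ∑ π : Equiv.Perm (Fin n), g π := by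
    intro g hg
    rw [integral_fintype _, Finset.mul_sum]
    exact Finset.sum_congr rfl fun π _ => by
      show ((uniformPermMeasure n) {π}).toReal • g π = _
      rw [hsingle π, smul_eq_mul]
    exact hg
  rw [hint _ h₁₂, hint _ h₁, hint _ h₂]
  set c : ℝ := (Fintype.card (Equiv.Perm (Fin n)) : ℝ) with hc
  have hcpos : 0 < c := by
    rw [hc]
    exact_mod_cast Fintype.card_pos
  have hsymm : ∀ (g : (Fin n ≃ Fin n) → ℝ),
      ∑ e : Fin n ≃ Fin n, g e = ∑ π : Equiv.Perm (Fin n), g π.symm :=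
    fun g => (Function.Bijective.sum_comp Equiv.symm_bijective g).symm
  have key := key_lemma n (Fin n) (Fin n) (Fintype.card_fin n) (Fintype.card_fin n) x A₁ A₂ hd f₁ f₂ hf₁ hf₂
  rw [hsymm (fun e => (f₁ fun i => x (e i.1)) * (f₂ fun i => x (e i.1))),
    hsymm (fun e => f₁ fun i => x (e i.1)),
    hsymm (fun e => f₂ fun i => x (e i.1))] at key
  have hkey : c * (∑ π : Equiv.Perm (Fin n),
        (f₁ fun i => x (π.symm i.1)) * (f₂ fun i => x (π.symm i.1)))
      ≤ (∑ π : Equiv.Perm (Fin n), f₁ fun i => x (π.symm i.1)) *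
        ∑ π : Equiv.Perm (Fin n), f₂ fun i => x (π.symm i.1) := key
  calc c⁻¹ * ∑ π : Equiv.Perm (Fin n),
        (f₁ fun i => x (π.symm i.1)) * (f₂ fun i => x (π.symm i.1))
      = c⁻¹ * c⁻¹ * (c * ∑ π : Equiv.Perm (Fin n),
          (f₁ fun i => x (π.symm i.1)) * (f₂ fun i => x (π.symm i.1))) := by
        field_simp
    _ ≤ c⁻¹ * c⁻¹ * ((∑ π : Equiv.Perm (Fin n), f₁ fun i => x (π.symm i.1)) *
          ∑ π : Equiv.Perm (Fin n), f₂ fun i => x (π.symm i.1)) := by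
        refine mul_le_mul_of_nonneg_left hkey (by positivity)
    _ = (c⁻¹ * ∑ π : Equiv.Perm (Fin n), f₁ fun i => x (π.symm i.1)) *
          (c⁻¹ * ∑ π : Equiv.Perm (Fin n), f₂ fun i => x (π.symm i.1)) := by ring
end

section
/- Let k ≥ 2 and q ≥ 2 be integers, and let a_1, ..., a_k ∈ [0,1] have mean μ ≥ 1/q. If some a_j satisfies a_j < 1/(2q), then max_{i ∈ {1,...,k}} a_i ≥ μ · (1 + 1/(2k−2)). -/
/-- Let `k ≥ 2`, `q ≥ 2` be integers and let `a 1, …, a k ∈ [0,1]` have mean `μ ≥ 1/q`.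
If some `a j < 1/(2q)`, then `max i, a i ≥ μ * (1 + 1/(2k - 2))`. -/
theorem max_ge_of_small_element {k q : ℕ} (hk : 2 ≤ k) (hq : 2 ≤ q)
    (a : Fin k → ℝ) (ha : ∀ i, a i ∈ Set.Icc (0 : ℝ) 1)
    (μ : ℝ) (hμ : μ = (∑ i, a i) / k) (hμq : 1 / (q : ℝ) ≤ μ)
    (j : Fin k) (hj : a j < 1 / (2 * (q : ℝ))) :
    μ * (1 + 1 / (2 * (k : ℝ) - 2)) ≤ Finset.univ.sup' ⟨j, Finset.mem_univ j⟩ a := by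
  set M := Finset.univ.sup' ⟨j, Finset.mem_univ j⟩ a with hM
  have hkR : (2 : ℝ) ≤ (k : ℝ) := by exact_mod_cast hk
  have hqR : (2 : ℝ) ≤ (q : ℝ) := by exact_mod_cast hq
  have hk1 : (0 : ℝ) < (k : ℝ) - 1 := by linarith
  have hk0 : (0 : ℝ) < (k : ℝ) := by linarith
  have hq0 : (0 : ℝ) < (q : ℝ) := by linarith
  have hsum : ∑ i, a i = (k : ℝ) * μ := by
    rw [hμ]; field_simp
  have hle : ∀ i ∈ Finset.univ, a i ≤ M := fun i hi => Finset.le_sup' a hi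
  have hsum_erase : ∑ i ∈ Finset.univ.erase j, a i ≤ ((k - 1 : ℕ) : ℝ) * M := by
    have hcard : (Finset.univ.erase j).card = k - 1 := by
      rw [Finset.card_erase_of_mem (Finset.mem_univ j), Finset.card_univ, Fintype.card_fin]
    calc ∑ i ∈ Finset.univ.erase j, a i
        ≤ (Finset.univ.erase j).card • M :=
          Finset.sum_le_card_nsmul _ _ _ (fun i hi => hle i (Finset.mem_univ i))
      _ = ((k - 1 : ℕ) : ℝ) * M := by rw [hcard, nsmul_eq_mul]
  have hcast : ((k - 1 : ℕ) : ℝ) = (k : ℝ) - 1 := by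
    have : 1 ≤ k := by omega
    push_cast [this]; ring
  have hsplit : a j + ∑ i ∈ Finset.univ.erase j, a i = (k : ℝ) * μ := by
    rw [Finset.add_sum_erase _ a (Finset.mem_univ j), hsum]
  have haj : a j < μ / 2 := by
    have : 1 / (2 * (q : ℝ)) = (1 / (q : ℝ)) / 2 := by field_simp
    rw [this] at hj
    linarith
  have hmain : (k : ℝ) * μ - μ / 2 ≤ ((k : ℝ) - 1) * M := by
    rw [hcast] at hsum_erase
    linarith
  have h1 : (k : ℝ) - 1 ≠ 0 := ne_of_gt hk1
  have h2 : 2 * (k : ℝ) - 2 ≠ 0 := by intro h; apply h1; linarith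
  have heq : μ * (1 + 1 / (2 * (k : ℝ) - 2)) = ((k : ℝ) * μ - μ / 2) / ((k : ℝ) - 1) := by
    field_simp
    ring
  rw [heq, div_le_iff₀ hk1]
  linarith
end

section
/- Let k, d, q, τ be positive integers with k ≥ 2, q ≥ 2, and d ≥ τ ≥ 2k·log(q) (logarithm base 2). Let v be a vertex of T_{k,d} of depth at most d − τ, and let A ⊆ L(T_{k,d}) satisfy Frac_A(v) ≥ 1/q. Then there exists a vertex u in T^{v,τ} (i.e., a descendant of v within distance τ − 1 of v) such that every child y of u satisfies Frac_A(y) ≥ 1/(2q). -/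
/-- Leaves of the full `k`-ary tree `T_{k,d}` are modelled as words `Fin d → Fin k`; a vertex of
depth `h` is modelled as a prefix `p : Fin h → Fin k`. `frac k d A h hhd p` is
`Frac_A(v) = |A ∩ L(T^v)| / Leaves(v)` for the vertex `v` given by the prefix `p`
(its subtree has exactly `k ^ (d - h)` leaves, namely the words extending `p`). -/
noncomputable def frac (k d : ℕ) (A : Finset (Fin d → Fin k)) (h : ℕ) (hhd : h ≤ d)
    (p : Fin h → Fin k) : ℝ :=
  ((A.filter fun w => ∀ i : Fin h, w (Fin.castLE hhd i) = p i).card : ℝ) / (k ^ (d - h) : ℝ)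


lemma pred_snoc_iff {k d h : ℕ} (hlt : h + 1 ≤ d) (p : Fin h → Fin k) (c : Fin k)
    (w : Fin d → Fin k) :
    (∀ i : Fin (h+1), w (Fin.castLE hlt i) = (Fin.snoc p c : Fin (h+1) → Fin k) i) ↔
      ((∀ i : Fin h, w (Fin.castLE (Nat.le_of_succ_le hlt) i) = p i) ∧ w ⟨h, hlt⟩ = c) := by
  constructor
  · intro H
    refine ⟨fun i => ?_, ?_⟩
    · have h1 := H i.castSucc
      rw [Fin.snoc_castSucc] at h1
      convert h1 using 2
      rfl
    · have h2 := H (Fin.last h)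
      rw [Fin.snoc_last] at h2
      convert h2 using 2
      rfl
  · rintro ⟨H1, H2⟩ i
    refine Fin.lastCases ?_ ?_ i
    · rw [Fin.snoc_last]
      convert H2 using 2
      rfl
    · intro j
      rw [Fin.snoc_castSucc]
      have := H1 j
      convert this using 2
      rfl

lemma card_filter_sum {k d h : ℕ} (A : Finset (Fin d → Fin k)) (hlt : h + 1 ≤ d)
    (p : Fin h → Fin k) :
    (A.filter fun w => ∀ i : Fin h, w (Fin.castLE (Nat.le_of_succ_le hlt) i) = p i).card
      = ∑ c : Fin k,
        (A.filter fun w => ∀ i : Fin (h+1), w (Fin.castLE hlt i) = (Fin.snoc p c : Fin (h+1) → Fin k) i).card := by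
  classical
  rw [Finset.card_eq_sum_card_fiberwise (f := fun w => w ⟨h, hlt⟩) (t := Finset.univ)
    (fun x _ => Finset.mem_univ _)]
  refine Finset.sum_congr rfl fun c _ => ?_
  rw [Finset.filter_filter]
  exact congrArg Finset.card (Finset.filter_congr fun w _ => by
    rw [pred_snoc_iff hlt])

lemma card_filter_univ {k d : ℕ} : ∀ n h (hhd : h ≤ d), d - h = n → ∀ p : Fin h → Fin k,
    ((Finset.univ : Finset (Fin d → Fin k)).filter
      fun w => ∀ i : Fin h, w (Fin.castLE hhd i) = p i).card = k ^ n := by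
  intro n
  induction n with
  | zero =>
    intro h hhd hn p
    have : h = d := by omega
    subst this
    have : ((Finset.univ : Finset (Fin h → Fin k)).filter
        fun w => ∀ i : Fin h, w (Fin.castLE hhd i) = p i) = {p} := by
      ext w
      simp only [Finset.mem_filter, Finset.mem_univ, true_and, Finset.mem_singleton]
      constructor
      · intro H; funext i; exact H i
      · intro H i; subst H; rfl
    rw [this]; simp
  | succ n ih =>
    intro h hhd hn p
    have hlt : h + 1 ≤ d := by omega
    rw [show ((Finset.univ : Finset (Fin d → Fin k)).filter
        fun w => ∀ i : Fin h, w (Fin.castLE hhd i) = p i)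
      = ((Finset.univ : Finset (Fin d → Fin k)).filter
        fun w => ∀ i : Fin h, w (Fin.castLE (Nat.le_of_succ_le hlt) i) = p i) from rfl]
    rw [card_filter_sum _ hlt p]
    have : ∀ c : Fin k, ((Finset.univ : Finset (Fin d → Fin k)).filter
        fun w => ∀ i : Fin (h+1), w (Fin.castLE hlt i) = (Fin.snoc p c : Fin (h+1) → Fin k) i).card = k ^ n :=
      fun c => ih (h+1) hlt (by omega) (Fin.snoc p c)
    rw [Finset.sum_congr rfl fun c _ => this c]
    simp [pow_succ, mul_comm]

lemma frac_nonneg {k d : ℕ} (A : Finset (Fin d → Fin k)) {h : ℕ} (hhd : h ≤ d)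
    (p : Fin h → Fin k) : 0 ≤ frac k d A h hhd p := by
  unfold frac
  positivity

lemma frac_le_one {k d : ℕ} (hk : 0 < k) (A : Finset (Fin d → Fin k)) {h : ℕ} (hhd : h ≤ d)
    (p : Fin h → Fin k) : frac k d A h hhd p ≤ 1 := by
  unfold frac
  rw [div_le_one (by positivity)]
  have hsub : (A.filter fun w => ∀ i : Fin h, w (Fin.castLE hhd i) = p i)
      ⊆ ((Finset.univ : Finset (Fin d → Fin k)).filter
        fun w => ∀ i : Fin h, w (Fin.castLE hhd i) = p i) :=
    Finset.filter_subset_filter _ (Finset.subset_univ A)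
  have := Finset.card_le_card hsub
  rw [card_filter_univ (d - h) h hhd rfl p] at this
  exact_mod_cast this

lemma frac_sum {k d : ℕ} (hk : 0 < k) (A : Finset (Fin d → Fin k)) {h : ℕ} (hlt : h + 1 ≤ d)
    (p : Fin h → Fin k) :
    ∑ c : Fin k, frac k d A (h+1) hlt (Fin.snoc p c)
      = k * frac k d A h (Nat.le_of_succ_le hlt) p := by
  unfold frac
  rw [← Finset.sum_div, ← Nat.cast_sum, ← card_filter_sum A hlt p]
  have hd : d - h = (d - (h+1)) + 1 := by omega
  rw [hd, pow_succ]
  have hkpos : (0:ℝ) < (k : ℝ) ^ (d - (h+1)) := by positivity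
  field_simp

lemma q_lt_rpow {k q τ : ℕ} (hk : 2 ≤ k) (hq : 2 ≤ q)
    (hτ : 2 * (k : ℝ) * Real.logb 2 q ≤ (τ : ℝ)) :
    (q : ℝ) < ((2*(k:ℝ)-1)/(2*(k:ℝ)-2)) ^ τ := by
  have hk2 : (2:ℝ) ≤ (k:ℝ) := by exact_mod_cast hk
  have hq2 : (2:ℝ) ≤ (q:ℝ) := by exact_mod_cast hq
  have hden : (0:ℝ) < 2*(k:ℝ)-2 := by linarith
  set r : ℝ := (2*(k:ℝ)-1)/(2*(k:ℝ)-2) with hrdef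
  have hr1 : 1 < r := by rw [lt_div_iff₀ hden]; linarith
  have hr0 : 0 < r := by linarith
  have hreq : r = 1 + 1/(2*(k:ℝ)-2) := by rw [hrdef, one_add_div hden.ne']; congr 1; ring
  -- step 1 : 2 ≤ r ^ (2k-2)
  have hcast : ((2*k-2 : ℕ) : ℝ) = 2*(k:ℝ)-2 := by
    push_cast [Nat.cast_sub (by omega : 2 ≤ 2*k)]; ring
  have h1 : (2:ℝ) ≤ r ^ (2*k-2) := by
    have := one_add_mul_le_pow (a := 1/(2*(k:ℝ)-2)) (le_trans (by norm_num : (-2:ℝ) ≤ 0) (by positivity)) (2*k-2)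
    rw [← hreq] at this
    calc (2:ℝ) = 1 + ((2*k-2:ℕ):ℝ) * (1/(2*(k:ℝ)-2)) := by
          rw [hcast, mul_one_div_cancel hden.ne']; norm_num
      _ ≤ r ^ (2*k-2) := this
  -- step 2 : 1 ≤ (2k-2) * logb 2 r
  set L : ℝ := Real.logb 2 r with hLdef
  have h2 : 1 ≤ (2*(k:ℝ)-2) * L := by
    have := Real.logb_le_logb_of_le (b := 2) (by norm_num) (by norm_num) h1
    rwa [Real.logb_self_eq_one (by norm_num), Real.logb_pow, hcast] at this
  have hL0 : 0 < L := by nlinarith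
  -- step 3 : logb 2 q < τ * L
  have hLq : 1 ≤ Real.logb 2 (q:ℝ) := by
    have := Real.logb_le_logb_of_le (b := 2) (by norm_num) (by norm_num) hq2
    rwa [Real.logb_self_eq_one (by norm_num)] at this
  have h3 : Real.logb 2 (q:ℝ) < (τ:ℝ) * L := by
    nlinarith [mul_le_mul_of_nonneg_right hτ hL0.le,
      mul_le_mul_of_nonneg_left h2 (by positivity : (0:ℝ) ≤ 2*(k:ℝ)*Real.logb 2 q)]
  -- conclude
  have h4 : Real.logb 2 (q:ℝ) < Real.logb 2 (r ^ τ) := by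
    rwa [Real.logb_pow]
  exact (Real.logb_lt_logb_iff (by norm_num) (by linarith) (by positivity)).mp h4

lemma key {k d q : ℕ} (hk : 2 ≤ k) (hq : 2 ≤ q) (A : Finset (Fin d → Fin k)) :
    ∀ m h (hm : h + m ≤ d) (p : Fin h → Fin k),
      (1:ℝ)/q ≤ frac k d A h (le_trans (Nat.le_add_right h m) hm) p →
      1 < ((2*(k:ℝ)-1)/(2*(k:ℝ)-2))^m * frac k d A h (le_trans (Nat.le_add_right h m) hm) p →
      ∃ (h' : ℕ) (hh : h ≤ h') (_ : h' < h + m) (hd' : h' < d) (p' : Fin h' → Fin k),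
        (∀ i : Fin h, p' (Fin.castLE hh i) = p i) ∧
        ∀ c : Fin k, (1:ℝ)/(2*q) ≤ frac k d A (h'+1) hd' (Fin.snoc p' c) := by
  intro m
  induction m with
  | zero =>
    intro h hm p hf hgt
    exfalso
    rw [pow_zero, one_mul] at hgt
    exact absurd hgt (not_lt.2 (frac_le_one (by omega) _ _ _))
  | succ m ih =>
    intro h hm p hf hgt
    have hk2 : (2:ℝ) ≤ (k:ℝ) := by exact_mod_cast hk
    have hq2 : (2:ℝ) ≤ (q:ℝ) := by exact_mod_cast hq
    have hden : (0:ℝ) < 2*(k:ℝ)-2 := by linarith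
    set r : ℝ := (2*(k:ℝ)-1)/(2*(k:ℝ)-2) with hrdef
    have hr1 : 1 ≤ r := by rw [le_div_iff₀ hden]; linarith
    have hr0 : 0 < r := by linarith
    have hlt : h + 1 ≤ d := by omega
    by_cases hall : ∀ c : Fin k, (1:ℝ)/(2*q) ≤ frac k d A (h+1) hlt (Fin.snoc p c)
    · exact ⟨h, le_refl h, by omega, by omega, p, fun i => rfl, fun c => hall c⟩
    · push_neg at hall
      obtain ⟨c0, hc0⟩ := hall
      have : Nonempty (Fin k) := ⟨c0⟩
      obtain ⟨cm, hcm⟩ :=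
        Finite.exists_max (fun c : Fin k => frac k d A (h+1) hlt (Fin.snoc p c))
      set F : ℝ := frac k d A h (le_trans (Nat.le_add_right h (m+1)) hm) p with hF
      set M : ℝ := frac k d A (h+1) hlt (Fin.snoc p cm) with hM
      have hsum : ∑ c : Fin k, frac k d A (h+1) hlt (Fin.snoc p c) = k * F :=
        frac_sum (by omega) A hlt p
      have hsplit : ∑ c : Fin k, frac k d A (h+1) hlt (Fin.snoc p c)
          = frac k d A (h+1) hlt (Fin.snoc p c0)
            + ∑ c ∈ Finset.univ.erase c0, frac k d A (h+1) hlt (Fin.snoc p c) :=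
        (Finset.add_sum_erase _ _ (Finset.mem_univ c0)).symm
      have hbound : ∑ c ∈ Finset.univ.erase c0, frac k d A (h+1) hlt (Fin.snoc p c)
          ≤ ((k:ℝ) - 1) * M := by
        have h1 := Finset.sum_le_card_nsmul (Finset.univ.erase c0)
          (fun c => frac k d A (h+1) hlt (Fin.snoc p c)) M (fun c _ => hcm c)
        rw [Finset.card_erase_of_mem (Finset.mem_univ c0), Finset.card_univ,
          Fintype.card_fin, nsmul_eq_mul] at h1
        have : ((k - 1 : ℕ) : ℝ) = (k:ℝ) - 1 := by
          push_cast [Nat.cast_sub (by omega : 1 ≤ k)]; ring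
        rwa [this] at h1
      have hF0 : (0:ℝ) < F := lt_of_lt_of_le (by positivity) hf
      have hkF : (k:ℝ) * F < 1/(2*q) + ((k:ℝ)-1) * M := by
        rw [← hsum, hsplit]
        exact add_lt_add_of_lt_of_le hc0 hbound
      have h2q : (1:ℝ)/(2*q) ≤ F/2 := by
        have he : (1:ℝ)/(2*q) = (1/q)/2 := by ring
        rw [he]; linarith
      have hMgt : r * F < M := by
        have hkm1 : (0:ℝ) < (k:ℝ) - 1 := by linarith
        have : ((k:ℝ)-1) * (r * F) < ((k:ℝ)-1) * M := by
          have hrF : ((k:ℝ)-1) * (r * F) = ((k:ℝ) - 1/2) * F := by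
            rw [hrdef]; field_simp
          rw [hrF]
          nlinarith [hkF, h2q]
        exact lt_of_mul_lt_mul_left this hkm1.le
      have hM1 : (1:ℝ)/q ≤ M := le_trans hf (le_trans (le_mul_of_one_le_left hF0.le hr1) hMgt.le)
      have hM2 : 1 < r^m * M := by
        have hrm : (0:ℝ) < r^m := by positivity
        calc 1 < r^(m+1) * F := hgt
          _ = r^m * (r * F) := by ring
          _ ≤ r^m * M := by nlinarith [hMgt, hrm]
      obtain ⟨h'', hh'', hlt'', hd'', p'', hpref, hgood⟩ :=
        ih (h+1) (by omega) (Fin.snoc p cm) hM1 hM2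
      refine ⟨h'', le_trans (Nat.le_succ h) hh'', by omega, hd'', p'', fun i => ?_, hgood⟩
      have h3 := hpref i.castSucc
      rw [Fin.snoc_castSucc] at h3
      convert h3 using 2
      rfl

/-- Let `k, q ≥ 2` and `d ≥ τ ≥ 2 k log₂ q`. Let `v` be a vertex of `T_{k,d}` of depth
`h ≤ d - τ` (given by the prefix `p`) with `Frac_A(v) ≥ 1/q`. Then there is a vertex `u` in
`T^{v,τ}` — i.e. a descendant of `v`, given by a prefix `p'` of some length `h' < h + τ`
extending `p` — all of whose `k` children `y` satisfy `Frac_A(y) ≥ 1/(2q)`. -/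
theorem exists_good_descendant {k d q τ : ℕ} (hk : 2 ≤ k) (hq : 2 ≤ q)
    (hτd : τ ≤ d) (hτ : 2 * (k : ℝ) * Real.logb 2 q ≤ (τ : ℝ))
    {h : ℕ} (hhd : h ≤ d - τ) (p : Fin h → Fin k)
    (A : Finset (Fin d → Fin k))
    (hfrac : (1 : ℝ) / q ≤ frac k d A h (by omega) p) :
    ∃ (h' : ℕ) (hh : h ≤ h') (_ : h' < h + τ) (hd' : h' < d) (p' : Fin h' → Fin k),
      (∀ i : Fin h, p' (Fin.castLE hh i) = p i) ∧
      ∀ c : Fin k, (1 : ℝ) / (2 * q) ≤ frac k d A (h' + 1) hd' (Fin.snoc p' c) := by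
  have hm : h + τ ≤ d := by omega
  have hq0 : (0:ℝ) < q := by exact_mod_cast (by omega : 0 < q)
  have hqr := q_lt_rpow hk hq hτ
  refine key hk hq A τ h hm p hfrac ?_
  have h1 : (1:ℝ) < ((2*(k:ℝ)-1)/(2*(k:ℝ)-2))^τ * (1/q) := by
    rw [mul_one_div, lt_div_iff₀ hq0, one_mul]
    exact hqr
  refine lt_of_lt_of_le h1 (mul_le_mul_of_nonneg_left hfrac ?_)
  have hk2 : (2:ℝ) ≤ (k:ℝ) := by exact_mod_cast hk
  exact pow_nonneg (le_of_lt (div_pos (by linarith) (by linarith))) τ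
end

section
/- Let k, d, q be integers with k ≥ 2, q ≥ 2, and d ≥ 4kq. If A ⊆ L(T_{k,d}) is a q-subset, then there exists a set F of vertices of T_{k,d} such that: (1) for each v ∈ F, every child u of v satisfies Frac_A(u) ≥ 1/(4q); and (2) Σ_{v ∈ F} Leaves(v) ≥ d · k^d · (4q)^{−3k·log(k)} (logarithm base 2). -/
/-- A vertex of the full `k`-ary tree `T_{k,d}`: a depth `h ∈ {0, …, d}` together with the
word of length `h` describing the path from the root. -/
abbrev Vtx (k d : ℕ) := Σ h : Fin (d + 1), (Fin (h : ℕ) → Fin k)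

open Finset

namespace HeavyAux

/-- number of words of `A` extending the prefix `p` (meaningful when `h ≤ d`). -/
def cnt (k d : ℕ) (A : Finset (Fin d → Fin k)) (h : ℕ) (p : Fin h → Fin k) : ℕ :=
  (A.filter fun w => ∀ i : Fin h, ∀ gi : (i : ℕ) < d, w ⟨i, gi⟩ = p i).card

variable {k d q : ℕ} {A : Finset (Fin d → Fin k)}

lemma frac_eq (h : ℕ) (hhd : h ≤ d) (p : Fin h → Fin k) :
    frac k d A h hhd p = (cnt k d A h p : ℝ) / (k ^ (d - h) : ℝ) := by
  unfold frac cnt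
  congr 2
  refine congrArg Finset.card (Finset.filter_congr ?_)
  intro w _
  constructor
  · exact fun H i gi => H i
  · exact fun H i => H i (lt_of_lt_of_le i.isLt hhd)

lemma cnt_succ (h : ℕ) (hlt : h < d) (p : Fin h → Fin k) :
    cnt k d A h p = ∑ c : Fin k, cnt k d A (h + 1) (Fin.snoc p c) := by
  classical
  have key : ∀ (c : Fin k) (w : Fin d → Fin k),
      (∀ i : Fin (h+1), ∀ gi : (i : ℕ) < d, w ⟨i, gi⟩ = (Fin.snoc p c : Fin (h+1) → Fin k) i) ↔
        ((∀ i : Fin h, ∀ gi : (i : ℕ) < d, w ⟨i, gi⟩ = p i) ∧ w ⟨h, hlt⟩ = c) := by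
    intro c w
    constructor
    · intro H
      constructor
      · intro i gi
        have := H i.castSucc (by simpa using gi)
        simpa [Fin.snoc_castSucc] using this
      · have := H (Fin.last h) hlt
        simpa [Fin.snoc_last] using this
    · rintro ⟨H1, H2⟩ i
      refine Fin.lastCases
        (motive := fun i : Fin (h+1) => ∀ gi : (i : ℕ) < d,
          w ⟨(i : ℕ), gi⟩ = (Fin.snoc p c : Fin (h+1) → Fin k) i) ?_ ?_ i
      · intro gi
        simpa [Fin.snoc_last] using H2
      · intro j gj
        have := H1 j (by simpa using gj)
        simpa [Fin.snoc_castSucc] using this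
  unfold cnt
  rw [Finset.card_eq_sum_card_fiberwise
    (f := fun w => w ⟨h, hlt⟩) (t := Finset.univ) (fun x _ => Finset.mem_univ _)]
  refine Finset.sum_congr rfl fun c _ => ?_
  rw [Finset.filter_filter]
  congr 1
  apply Finset.filter_congr
  intro w _
  simpa using (key c w).symm

lemma cnt_le_aux : ∀ (n h : ℕ), h ≤ d → d - h = n → ∀ p : Fin h → Fin k,
    cnt k d A h p ≤ k ^ n := by
  intro n
  induction n with
  | zero =>
    intro h hhd hn p
    have hd : h = d := by omega
    subst hd
    simp only [pow_zero]
    unfold cnt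
    rw [Finset.card_le_one]
    intro a ha b hb
    simp only [cnt, Finset.mem_filter] at ha hb
    funext i
    rw [show a i = a ⟨(i:ℕ), i.isLt⟩ from rfl, ha.2 i i.isLt,
      show b i = b ⟨(i:ℕ), i.isLt⟩ from rfl, hb.2 i i.isLt]
  | succ n ih =>
    intro h hhd hn p
    have hlt : h < d := by omega
    rw [cnt_succ h hlt p]
    calc ∑ c : Fin k, cnt k d A (h+1) (Fin.snoc p c) ≤ ∑ _c : Fin k, k ^ n := by
          apply Finset.sum_le_sum
          intro c _
          exact ih (h+1) hlt (by omega) _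
      _ = k ^ (n+1) := by simp [Finset.sum_const, mul_comm, pow_succ]

lemma cnt_le (h : ℕ) (hhd : h ≤ d) (p : Fin h → Fin k) :
    cnt k d A h p ≤ k ^ (d - h) := cnt_le_aux (d - h) h hhd rfl p

lemma sum_cnt : ∀ (h : ℕ), h ≤ d → ∑ p : Fin h → Fin k, cnt k d A h p = A.card := by
  intro h
  induction h with
  | zero =>
    intro _
    have h1 : ∀ p : Fin 0 → Fin k, cnt k d A 0 p = A.card := by
      intro p
      unfold cnt
      rw [Finset.filter_true_of_mem]
      intro w _
      intro i
      exact i.elim0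
    simp [h1]
  | succ h ih =>
    intro hhd
    have hlt : h < d := hhd
    let e : Fin k × (Fin h → Fin k) ≃ (Fin (h+1) → Fin k) :=
      { toFun := fun x => Fin.snoc x.2 x.1
        invFun := fun p => (p (Fin.last h), Fin.init p)
        left_inv := fun x => by simp
        right_inv := fun p => by simp }
    rw [← Equiv.sum_comp e (fun p => cnt k d A (h+1) p)]
    have : ∀ x : Fin k × (Fin h → Fin k),
        cnt k d A (h+1) (e x) = cnt k d A (h+1) (Fin.snoc x.2 x.1) := by
      intro x
      rfl
    rw [Finset.sum_congr rfl fun x _ => this x]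
    rw [Fintype.sum_prod_type_right]
    rw [Finset.sum_congr rfl fun p (_ : p ∈ Finset.univ) =>
      (Finset.sum_congr rfl fun c _ => rfl : ∑ c : Fin k, cnt k d A (h+1) (Fin.snoc p c) = _)]
    calc ∑ p : Fin h → Fin k, ∑ c : Fin k, cnt k d A (h+1) (Fin.snoc p c)
        = ∑ p : Fin h → Fin k, cnt k d A h p := by
          refine Finset.sum_congr rfl fun p _ => ?_
          exact (cnt_succ h hlt p).symm
      _ = A.card := ih (le_of_lt hlt)

end HeavyAux
namespace HeavyAux

variable {k d q : ℕ} {A : Finset (Fin d → Fin k)}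

/-- `good p` : every child of the vertex `p` has `Frac ≥ 1/(4q)`. -/
def good (k d q : ℕ) (A : Finset (Fin d → Fin k)) (h : ℕ) (p : Fin h → Fin k) : Prop :=
  ∀ c : Fin k, k ^ (d - (h + 1)) ≤ 4 * q * cnt k d A (h + 1) (Fin.snoc p c)

/-- Bernoulli with quadratic term. -/
lemma bernoulli2 (n : ℕ) : ∀ x : ℝ, 0 ≤ x →
    1 + n * x + n * (n - 1) / 2 * x ^ 2 ≤ (1 + x) ^ n := by
  induction n with
  | zero => intro x hx; norm_num
  | succ n ih =>
    intro x hx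
    have h1 := ih x hx
    have h2 : (0:ℝ) ≤ n * x := by positivity
    have h3 : (0:ℝ) ≤ n * (n-1)/2 * x^2 := by
      have : (0:ℝ) ≤ (n:ℝ) * (n-1) := by
        rcases Nat.eq_zero_or_pos n with h | h
        · simp [h]
        · have : (1:ℝ) ≤ (n:ℝ) := by exact_mod_cast h
          nlinarith
      positivity
    have h4 : ((n:ℕ)+1 : ℝ) = (n:ℝ) + 1 := by push_cast; ring
    calc 1 + (↑(n+1)) * x + (↑(n+1)) * ((↑(n+1)) - 1) / 2 * x ^ 2
        ≤ (1 + n * x + n * (n - 1) / 2 * x ^ 2) * (1 + x) := by push_cast; nlinarith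
      _ ≤ (1 + x) ^ n * (1 + x) := by
          apply mul_le_mul_of_nonneg_right h1 (by linarith)
      _ = (1 + x) ^ (n + 1) := by ring

lemma one_add_pow_2k (hk : 2 ≤ k) : (9/4 : ℝ) ≤ (1 + 1/(2*(k:ℝ))) ^ (2*k) := by
  have hkR : (2:ℝ) ≤ (k:ℝ) := by exact_mod_cast hk
  have hx : (0:ℝ) ≤ 1/(2*(k:ℝ)) := by positivity
  have := bernoulli2 (2*k) (1/(2*(k:ℝ))) hx
  have hcast : ((2*k : ℕ) : ℝ) = 2*(k:ℝ) := by push_cast; ring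
  rw [hcast] at this
  have hkpos : (0:ℝ) < 2*(k:ℝ) := by linarith
  have key : (9/4 : ℝ) ≤ 1 + (2*(k:ℝ)) * (1/(2*(k:ℝ))) +
      (2*(k:ℝ)) * ((2*(k:ℝ)) - 1) / 2 * (1/(2*(k:ℝ)))^2 := by
    set y : ℝ := 1/(2*(k:ℝ)) with hy
    have h1 : (2*(k:ℝ)) * y = 1 := by rw [hy]; field_simp
    have hy0 : 0 < y := by rw [hy]; positivity
    have hy4 : y ≤ 1/4 := by
      rw [hy, div_le_div_iff₀ (by positivity) (by norm_num)]
      linarith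
    nlinarith [sq_nonneg y, mul_pos hy0 hy0]
  linarith

set_option maxHeartbeats 1000000 in
/-- The walk lemma: from any sufficiently heavy vertex one reaches a good vertex
within `s` levels, provided `(1+1/(2k))^s` beats `2q`. -/
lemma walk (hk : 2 ≤ k) (hq : 1 ≤ q) :
    ∀ (s h : ℕ), h + s ≤ d → ∀ p : Fin h → Fin k,
    ((k:ℝ) ^ (d - h)) ≤ 2 * q * (cnt k d A h p : ℝ) →
    ((k:ℝ) ^ (d - h)) < (cnt k d A h p : ℝ) * (1 + 1/(2*(k:ℝ))) ^ s →
    ∃ (h' : ℕ) (hh : h ≤ h') (_ : h' < d) (p' : Fin h' → Fin k),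
      h' < h + s ∧ (∀ i : Fin h, p' (Fin.castLE hh i) = p i) ∧ good k d q A h' p' := by
  have hkR : (2:ℝ) ≤ (k:ℝ) := by exact_mod_cast hk
  intro s
  induction s with
  | zero =>
    intro h hs p hheavy hgrow
    exfalso
    have hle : (cnt k d A h p : ℝ) ≤ (k:ℝ) ^ (d - h) := by
      have := cnt_le (A := A) h (by omega) p
      exact_mod_cast this
    simp only [pow_zero, mul_one] at hgrow
    linarith
  | succ s ih =>
    intro h hs p hheavy hgrow
    have hlt : h < d := by omega
    by_cases hg : good k d q A h p
    · exact ⟨h, le_refl h, hlt, p, by omega, fun i => rfl, hg⟩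
    · simp only [good, not_forall, not_le] at hg
      obtain ⟨c₀, hc₀⟩ := hg
      -- notation
      set n1 : ℝ := (k:ℝ) ^ (d - (h+1)) with hn1
      have hd1 : d - h = (d - (h+1)) + 1 := by omega
      have hkn : (k:ℝ) ^ (d - h) = (k:ℝ) * n1 := by
        rw [hd1, pow_succ]; ring
      have hn1pos : 0 < n1 := by positivity
      set N : Fin k → ℝ := fun c => (cnt k d A (h+1) (Fin.snoc p c) : ℝ) with hN
      have hsum : (cnt k d A h p : ℝ) = ∑ c : Fin k, N c := by
        rw [cnt_succ h hlt p]; push_cast; rfl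
      have hNnonneg : ∀ c, 0 ≤ N c := fun c => by positivity
      set T : ℝ := (cnt k d A h p : ℝ) with hT
      have hTpos : 0 < T := by
        by_contra hc
        push_neg at hc
        have : (k:ℝ)^(d-h) ≤ 0 := le_trans hheavy (by nlinarith)
        have : (0:ℝ) < (k:ℝ)^(d-h) := by positivity
        linarith
      have hlight : N c₀ < n1 / (4*q) := by
        rw [lt_div_iff₀ (by positivity)]
        have h0 : ((4 * q * cnt k d A (h+1) (Fin.snoc p c₀) : ℕ) : ℝ) <
            ((k ^ (d - (h+1)) : ℕ) : ℝ) := by exact_mod_cast hc₀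
        push_cast at h0
        rw [hn1, hN]
        nlinarith [h0]
      have hqR : (1:ℝ) ≤ (q:ℝ) := by exact_mod_cast hq
      -- n1/(4q) ≤ T/(2k)
      have hn1T : n1 / (4*q) ≤ T / (2*(k:ℝ)) := by
        have h1 : (k:ℝ) * n1 ≤ 2*q*T := by rw [← hkn]; exact hheavy
        rw [div_le_div_iff₀ (by positivity) (by positivity)]
        nlinarith
      -- find a high child
      have hcard : ((Finset.univ.erase c₀).card : ℝ) = (k:ℝ) - 1 := by
        rw [Finset.card_erase_of_mem (Finset.mem_univ c₀)]
        simp only [Finset.card_univ, Fintype.card_fin]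
        have : 1 ≤ k := by omega
        push_cast [Nat.cast_sub this]
        ring
      have hNc₀ : N c₀ ≤ T/(2*(k:ℝ)) := le_trans (le_of_lt hlight) hn1T
      have hsub : (Finset.univ.erase c₀).sum N = T - N c₀ := by
        rw [Finset.sum_erase_eq_sub (Finset.mem_univ c₀), ← hsum]
      have hsum' : T * (2*(k:ℝ)-1)/(2*(k:ℝ)) ≤ (Finset.univ.erase c₀).sum N := by
        rw [hsub]
        have hk0 : (2*(k:ℝ)) ≠ 0 := by positivity
        have hTk : T * (2*(k:ℝ)-1)/(2*(k:ℝ)) = T - T/(2*(k:ℝ)) := by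
          field_simp
        rw [hTk]
        linarith
      have hne : (Finset.univ.erase c₀).Nonempty := by
        rw [← Finset.card_pos]
        have : (Finset.univ.erase c₀).card = k - 1 := by
          rw [Finset.card_erase_of_mem (Finset.mem_univ c₀)]
          simp
        omega
      set b : ℝ := T * (2*(k:ℝ)-1) / (2*(k:ℝ)*((k:ℝ)-1)) with hb
      have hbex : ∃ c ∈ Finset.univ.erase c₀, b ≤ N c := by
        apply Finset.exists_le_of_sum_le hne
        have : (Finset.univ.erase c₀).sum (fun _ => b) = ((k:ℝ)-1) * b := by
          rw [Finset.sum_const, ← hcard]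
          simp [nsmul_eq_mul]
        rw [this]
        have hk1 : ((k:ℝ)-1) ≠ 0 := by
          have : (1:ℝ) < (k:ℝ) := by linarith
          linarith [this]
        have hk1' : (0:ℝ) < (k:ℝ) - 1 := by linarith
        have hbval : ((k:ℝ)-1) * b = T * (2*(k:ℝ)-1)/(2*(k:ℝ)) := by
          rw [hb]
          field_simp
        rw [hbval]
        exact hsum'
      obtain ⟨c, _, hcb⟩ := hbex
      -- N c ≥ T * (2k+1)/(2k^2)
      have hk1' : (0:ℝ) < (k:ℝ) - 1 := by linarith
      have hNc : T * (2*(k:ℝ)+1)/(2*(k:ℝ)^2) ≤ N c := by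
        refine le_trans ?_ hcb
        rw [hb, div_le_div_iff₀ (by positivity) (mul_pos (by positivity) hk1')]
        nlinarith [hTpos, hk1', mul_pos hTpos hk1', mul_pos (mul_pos hTpos hk1') hk1']
      -- apply ih
      have h1 : T/(k:ℝ) ≤ N c := by
        refine le_trans ?_ hNc
        rw [div_le_div_iff₀ (by positivity) (by positivity)]
        have hkpos : (0:ℝ) < (k:ℝ) := by linarith
        nlinarith [mul_nonneg hTpos.le hkpos.le]
      have hheavy' : (k:ℝ) ^ (d - (h+1)) ≤ 2*q*(N c) := by
        have h2 : (k:ℝ)*n1 ≤ 2*q*T := by rw [← hkn]; exact hheavy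
        have hkpos : (0:ℝ) < (k:ℝ) := by linarith
        have h3 : n1 * (k:ℝ) ≤ (2*q*(N c)) * (k:ℝ) := by
          have h4 : 2*(q:ℝ)*T = (2*q*(T/(k:ℝ)))*(k:ℝ) := by field_simp
          have h5 : (2*(q:ℝ)*(T/(k:ℝ)))*(k:ℝ) ≤ (2*q*(N c))*(k:ℝ) := by
            have h6 := mul_le_mul_of_nonneg_left h1 (show (0:ℝ) ≤ 2*(q:ℝ)*(k:ℝ) by positivity)
            nlinarith [h6]
          nlinarith [h2]
        have := le_of_mul_le_mul_right h3 hkpos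
        rw [← hn1]; exact this
      have hgrow' : (k:ℝ) ^ (d - (h+1)) < (N c) * (1 + 1/(2*(k:ℝ))) ^ s := by
        have hkpos : (0:ℝ) < (k:ℝ) := by linarith
        have hgain : T * (1 + 1/(2*(k:ℝ))) / (k:ℝ) ≤ N c := by
          refine le_trans (le_of_eq ?_) hNc
          field_simp
        have hpow : (0:ℝ) ≤ (1 + 1/(2*(k:ℝ))) ^ s := by positivity
        have h2 : (k:ℝ)*n1 < T * (1 + 1/(2*(k:ℝ))) ^ (s+1) := by
          rw [← hkn]; exact hgrow
        have h4 : n1 < (T * (1 + 1/(2*(k:ℝ)))/(k:ℝ)) * (1 + 1/(2*(k:ℝ)))^s := by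
          rw [div_mul_eq_mul_div, lt_div_iff₀ hkpos]
          calc n1 * (k:ℝ) = (k:ℝ) * n1 := by ring
            _ < T * (1 + 1/(2*(k:ℝ))) ^ (s+1) := h2
            _ = T * (1 + 1/(2*(k:ℝ))) * (1 + 1/(2*(k:ℝ)))^s := by ring
        rw [← hn1]
        exact lt_of_lt_of_le h4 (mul_le_mul_of_nonneg_right hgain hpow)
      obtain ⟨h', hh', hd', p', hlt', hext', hgood'⟩ :=
        ih (h+1) (by omega) (Fin.snoc p c) hheavy' hgrow'
      refine ⟨h', le_trans (Nat.le_succ h) hh', hd', p', by omega, ?_, hgood'⟩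
      intro i
      have : Fin.castLE (le_trans (Nat.le_succ h) hh') i =
          Fin.castLE hh' (Fin.castLE (Nat.le_succ h) i) := by
        apply Fin.ext; rfl
      rw [this, hext' (Fin.castLE (Nat.le_succ h) i)]
      have : Fin.castLE (Nat.le_succ h) i = Fin.castSucc i := by apply Fin.ext; rfl
      rw [this, Fin.snoc_castSucc]

end HeavyAux
namespace HeavyAux

variable {k d q : ℕ} {A : Finset (Fin d → Fin k)}

/-- Vertices at depth `h` with `Frac ≥ 1/(2q)`. -/
def Hset (k d q : ℕ) (A : Finset (Fin d → Fin k)) (h : ℕ) : Finset (Fin h → Fin k) :=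
  Finset.univ.filter (fun p => k ^ (d - h) ≤ 2 * q * cnt k d A h p)

lemma Hcard (hk : 1 ≤ k) (hq : 1 ≤ q) (h : ℕ) (hhd : h ≤ d)
    (hA : ((k:ℝ) ^ d) / q ≤ (A.card : ℝ)) :
    (k:ℝ) ^ d ≤ 2 * q * (((Hset k d q A h).card : ℝ) * (k:ℝ) ^ (d - h)) := by
  classical
  have hqR : (1:ℝ) ≤ (q:ℝ) := by exact_mod_cast hq
  have hkR : (1:ℝ) ≤ (k:ℝ) := by exact_mod_cast hk
  have hsum : ∑ p : Fin h → Fin k, (cnt k d A h p : ℝ) = (A.card : ℝ) := by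
    exact_mod_cast congrArg (Nat.cast : ℕ → ℝ) (sum_cnt h hhd)
  have hsplit := Finset.sum_filter_add_sum_filter_not Finset.univ
    (fun p : Fin h → Fin k => k ^ (d - h) ≤ 2 * q * cnt k d A h p)
    (fun p => (cnt k d A h p : ℝ))
  have hbound1 : ∑ p ∈ Hset k d q A h, (cnt k d A h p : ℝ) ≤
      ((Hset k d q A h).card : ℝ) * (k:ℝ) ^ (d - h) := by
    rw [← nsmul_eq_mul]
    apply Finset.sum_le_card_nsmul
    intro p _
    have := cnt_le (A := A) h hhd p
    calc (cnt k d A h p : ℝ) ≤ ((k ^ (d-h) : ℕ) : ℝ) := by exact_mod_cast this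
      _ = (k:ℝ) ^ (d-h) := by push_cast; ring
  have hbound2 : ∑ p ∈ Finset.univ.filter
      (fun p : Fin h → Fin k => ¬ (k ^ (d - h) ≤ 2 * q * cnt k d A h p)),
      (cnt k d A h p : ℝ) ≤ ((k:ℝ) ^ h) * ((k:ℝ) ^ (d - h) / (2*q)) := by
    have hcard : ((Finset.univ.filter (fun p : Fin h → Fin k =>
        ¬ (k ^ (d - h) ≤ 2 * q * cnt k d A h p))).card : ℝ) ≤ (k:ℝ) ^ h := by
      calc ((Finset.univ.filter _).card : ℝ) ≤ ((Finset.univ : Finset (Fin h → Fin k)).card : ℝ) := by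
            exact_mod_cast Finset.card_le_card (Finset.filter_subset _ _)
        _ = (k:ℝ) ^ h := by
            simp [Finset.card_univ]
    calc ∑ p ∈ Finset.univ.filter (fun p : Fin h → Fin k =>
          ¬ (k ^ (d - h) ≤ 2 * q * cnt k d A h p)), (cnt k d A h p : ℝ)
        ≤ ∑ p ∈ Finset.univ.filter (fun p : Fin h → Fin k =>
          ¬ (k ^ (d - h) ≤ 2 * q * cnt k d A h p)), (k:ℝ) ^ (d - h) / (2*q) := by
          apply Finset.sum_le_sum
          intro p hp
          rw [Finset.mem_filter] at hp
          have hlt : 2 * q * cnt k d A h p < k ^ (d-h) := by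
            omega
          have hltR : 2 * (q:ℝ) * (cnt k d A h p : ℝ) < (k:ℝ) ^ (d-h) := by
            have : ((2 * q * cnt k d A h p : ℕ) : ℝ) < ((k ^ (d-h) : ℕ) : ℝ) := by
              exact_mod_cast hlt
            push_cast at this
            linarith
          rw [le_div_iff₀ (by positivity)]
          linarith
      _ ≤ ((k:ℝ) ^ h) * ((k:ℝ) ^ (d - h) / (2*q)) := by
          rw [Finset.sum_const, nsmul_eq_mul]
          apply mul_le_mul_of_nonneg_right hcard (by positivity)
  have hkd : ((k:ℝ) ^ h) * ((k:ℝ) ^ (d-h)) = (k:ℝ) ^ d := by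
    rw [← pow_add]
    congr 1
    omega
  have hA2 : ((k:ℝ) ^ d) / q ≤ ((Hset k d q A h).card : ℝ) * (k:ℝ) ^ (d - h)
      + ((k:ℝ) ^ h) * ((k:ℝ) ^ (d - h) / (2*q)) := by
    calc ((k:ℝ) ^ d) / q ≤ (A.card : ℝ) := hA
      _ = ∑ p : Fin h → Fin k, (cnt k d A h p : ℝ) := hsum.symm
      _ = _ + _ := hsplit.symm
      _ ≤ _ := by unfold Hset; exact add_le_add hbound1 hbound2
  have hq0 : (0:ℝ) < (q:ℝ) := by linarith
  have hh2 : ((k:ℝ) ^ h) * ((k:ℝ) ^ (d - h) / (2*q)) = (k:ℝ)^d/(2*q) := by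
    rw [mul_div_assoc'] at *
    rw [hkd]
  rw [hh2] at hA2
  have hkd0 : (0:ℝ) < (k:ℝ)^d := by positivity
  have hstep : (k:ℝ)^d/(2*q) ≤ ((Hset k d q A h).card : ℝ) * (k:ℝ) ^ (d - h) := by
    have : ((k:ℝ)^d)/q - (k:ℝ)^d/(2*q) = (k:ℝ)^d/(2*q) := by
      field_simp
      ring
    linarith
  rw [div_le_iff₀ (by positivity : (0:ℝ) < 2*(q:ℝ))] at hstep
  linarith

/-- `(9/4)^q` beats `2q`. -/
lemma pow94_gt (hq : 2 ≤ q) : (2 * q : ℚ) < (9/4) ^ q := by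
  induction q with
  | zero => omega
  | succ n ih =>
    rcases Nat.lt_or_ge n 2 with hn | hn
    · interval_cases n
      · omega
      · norm_num
    · have h1 := ih hn
      have h2 : ((n:ℚ)) ≥ 2 := by exact_mod_cast hn
      push_cast
      calc (2 * ((n:ℚ) + 1)) = 2 * n + 2 := by ring
        _ < (9/4) * (2 * n) := by nlinarith
        _ < (9/4) * (9/4)^n := by nlinarith
        _ = (9/4)^(n+1) := by ring

end HeavyAux
namespace HeavyAux

open Real

lemma one_le_logb_two {a : ℕ} (ha : 2 ≤ a) : (1:ℝ) ≤ Real.logb 2 a := by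
  rw [Real.le_logb_iff_rpow_le (by norm_num) (by positivity : (0:ℝ) < (a:ℝ)), Real.rpow_one]
  exact_mod_cast ha

lemma logb_94 : (7:ℝ)/6 ≤ Real.logb 2 (9/4) := by
  have h1 : ((2:ℝ))^(7:ℕ) ≤ ((9:ℝ)/4)^(6:ℕ) := by norm_num
  have h2 := Real.log_le_log (by positivity) h1
  rw [Real.log_pow, Real.log_pow] at h2
  have hlog2 : 0 < Real.log 2 := Real.log_pos (by norm_num)
  rw [Real.logb, le_div_iff₀ hlog2]
  push_cast at h2
  linarith

lemma final_algebra {X Lv lm kR tR : ℝ} (hLv : 3 ≤ Lv)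
    (h76 : tR - 1 ≤ (6/7)*(Lv-1)) (hlm : lm ≤ X + Lv - 1)
    (hkx2 : 2 ≤ kR * X) :
    Lv + lm + (2*kR*tR - 1)*X ≤ 3*kR*X*Lv := by
  nlinarith [mul_le_mul_of_nonneg_left h76 (show (0:ℝ) ≤ 2*kR*X by nlinarith),
    mul_nonneg (sub_nonneg.mpr hkx2) (show (0:ℝ) ≤ 9*Lv - 2 by linarith)]

lemma final_numeric {k q t : ℕ} (hk : 2 ≤ k) (hq : 2 ≤ q) (ht1 : 1 ≤ t) (htq : t ≤ q)
    (htmin : ((9:ℝ)/4) ^ (t - 1 : ℕ) ≤ 2 * q) :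
    4 * (q:ℝ) * ((2*k*t : ℕ) : ℝ) * (k:ℝ) ^ ((2*k*t : ℕ) - 1) ≤
      (4 * (q:ℝ)) ^ (3 * (k:ℝ) * Real.logb 2 (k:ℝ)) := by
  have hb2 : (1:ℝ) < 2 := by norm_num
  have hkR : (2:ℝ) ≤ (k:ℝ) := by exact_mod_cast hk
  have hqR : (2:ℝ) ≤ (q:ℝ) := by exact_mod_cast hq
  have htR : (1:ℝ) ≤ (t:ℝ) := by exact_mod_cast ht1
  have htqR : (t:ℝ) ≤ (q:ℝ) := by exact_mod_cast htq
  have hq0 : (0:ℝ) < (q:ℝ) := by linarith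
  have hk0 : (0:ℝ) < (k:ℝ) := by linarith
  have l2 : Real.logb 2 2 = 1 := Real.logb_self_eq_one hb2
  have l4 : Real.logb 2 4 = 2 := by
    rw [show (4:ℝ) = 2*2 by norm_num, Real.logb_mul (by norm_num) (by norm_num), l2]
    norm_num
  have hx1 : 1 ≤ Real.logb 2 (k:ℝ) := one_le_logb_two hk
  have hlogq : 1 ≤ Real.logb 2 (q:ℝ) := one_le_logb_two hq
  have hL : Real.logb 2 (4*(q:ℝ)) = 2 + Real.logb 2 (q:ℝ) := by
    rw [Real.logb_mul (by norm_num) (by positivity), l4]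
  have hL3 : (3:ℝ) ≤ Real.logb 2 (4*(q:ℝ)) := by rw [hL]; linarith
  -- abbreviations (plain, no `set`)
  have ht76 : ((t:ℝ) - 1) ≤ (6/7) * (Real.logb 2 (4*(q:ℝ)) - 1) := by
    have h1 : Real.logb 2 (((9:ℝ)/4) ^ (t-1 : ℕ)) ≤ Real.logb 2 (2*(q:ℝ)) :=
      Real.logb_le_logb_of_le hb2 (by positivity) htmin
    rw [Real.logb_pow] at h1
    have h2 : Real.logb 2 (2*(q:ℝ)) = 1 + Real.logb 2 (q:ℝ) := by
      rw [Real.logb_mul (by norm_num) (by positivity), l2]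
    have hcast : ((t - 1 : ℕ) : ℝ) = (t:ℝ) - 1 := by
      push_cast [Nat.cast_sub ht1]
      ring
    rw [hcast, h2] at h1
    have h3 := logb_94
    have ht0 : (0:ℝ) ≤ (t:ℝ) - 1 := by linarith
    rw [hL]
    nlinarith [mul_le_mul_of_nonneg_left h3 ht0]
  have hmR : ((2*k*t : ℕ) : ℝ) = 2*(k:ℝ)*(t:ℝ) := by push_cast; ring
  have hm1 : (1:ℝ) ≤ ((2*k*t : ℕ) : ℝ) := by rw [hmR]; nlinarith
  have hmpos : (0:ℝ) < ((2*k*t : ℕ) : ℝ) := by linarith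
  have hlogm : Real.logb 2 ((2*k*t : ℕ) : ℝ) ≤
      Real.logb 2 (k:ℝ) + Real.logb 2 (4*(q:ℝ)) - 1 := by
    have h1 : ((2*k*t : ℕ) : ℝ) ≤ 2*(k:ℝ)*(q:ℝ) := by rw [hmR]; nlinarith
    have h2 : Real.logb 2 ((2*k*t : ℕ) : ℝ) ≤ Real.logb 2 (2*(k:ℝ)*(q:ℝ)) :=
      Real.logb_le_logb_of_le hb2 hmpos h1
    have h3 : Real.logb 2 (2*(k:ℝ)*(q:ℝ)) = 1 + Real.logb 2 (k:ℝ) + Real.logb 2 (q:ℝ) := by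
      rw [Real.logb_mul (by positivity) (by positivity),
        Real.logb_mul (by norm_num) (by positivity), l2]
    rw [h3] at h2
    rw [hL]
    linarith
  have hmcast : (((2*k*t : ℕ) - 1 : ℕ):ℝ) = ((2*k*t : ℕ) : ℝ) - 1 := by
    have hm1' : 1 ≤ 2*k*t := by exact_mod_cast hm1
    push_cast [Nat.cast_sub hm1']
    ring
  have hPpos : (0:ℝ) < 4 * (q:ℝ) * ((2*k*t : ℕ) : ℝ) * (k:ℝ) ^ ((2*k*t : ℕ) - 1) := by
    positivity
  have hRpos : (0:ℝ) < (4 * (q:ℝ)) ^ (3 * (k:ℝ) * Real.logb 2 (k:ℝ)) :=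
    Real.rpow_pos_of_pos (by linarith) _
  have hlogP : Real.logb 2 (4 * (q:ℝ) * ((2*k*t : ℕ) : ℝ) * (k:ℝ) ^ ((2*k*t : ℕ) - 1)) =
      Real.logb 2 (4*(q:ℝ)) + Real.logb 2 ((2*k*t : ℕ) : ℝ)
        + (((2*k*t : ℕ) - 1 : ℕ):ℝ) * Real.logb 2 (k:ℝ) := by
    rw [Real.logb_mul (by positivity) (by positivity),
      Real.logb_mul (by positivity) (by positivity), Real.logb_pow]
  have hlogR : Real.logb 2 ((4 * (q:ℝ)) ^ (3 * (k:ℝ) * Real.logb 2 (k:ℝ))) =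
      3 * (k:ℝ) * Real.logb 2 (k:ℝ) * Real.logb 2 (4*(q:ℝ)) :=
    Real.logb_rpow_eq_mul_logb_of_pos (by linarith)
  have hkx2 : (2:ℝ) ≤ (k:ℝ) * Real.logb 2 (k:ℝ) := by nlinarith
  have hmain : Real.logb 2 (4 * (q:ℝ) * ((2*k*t : ℕ) : ℝ) * (k:ℝ) ^ ((2*k*t : ℕ) - 1)) ≤
      Real.logb 2 ((4 * (q:ℝ)) ^ (3 * (k:ℝ) * Real.logb 2 (k:ℝ))) := by
    rw [hlogP, hlogR, hmcast]
    rw [hmR] at hlogm ⊢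
    exact final_algebra hL3 ht76 hlogm hkx2
  exact (Real.logb_le_logb hb2 hPpos hRpos).mp hmain

end HeavyAux
set_option maxHeartbeats 1600000 in
/-- Let `k, q ≥ 2` and `d ≥ 4 k q`. If `A ⊆ L(T_{k,d})` is a `q`-subset (`|A| ≥ k^d / q`),
then there is a set `F` of vertices of `T_{k,d}` such that (1) every child `u` of every
`v ∈ F` satisfies `Frac_A(u) ≥ 1/(4q)`, and (2) `∑_{v ∈ F} Leaves(v) ≥ d k^d (4q)^{-3 k log₂ k}`
(where `Leaves(v) = k^{d - depth v}`). -/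
theorem exists_heavy_good_family {k d q : ℕ} (hk : 2 ≤ k) (hq : 2 ≤ q)
    (hd : 4 * k * q ≤ d)
    (A : Finset (Fin d → Fin k)) (hA : (k ^ d : ℝ) / q ≤ (A.card : ℝ)) :
    ∃ F : Finset (Vtx k d),
      (∀ v ∈ F, ∃ hv : (v.1 : ℕ) < d,
        ∀ c : Fin k, (1 : ℝ) / (4 * q) ≤ frac k d A ((v.1 : ℕ) + 1) hv (Fin.snoc v.2 c)) ∧
      (d : ℝ) * (k : ℝ) ^ d * (4 * (q : ℝ)) ^ (-(3 * (k : ℝ) * Real.logb 2 k)) ≤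
        ∑ v ∈ F, (k : ℝ) ^ (d - (v.1 : ℕ)) := by

  classical
  have hkR : (2:ℝ) ≤ (k:ℝ) := by exact_mod_cast hk
  have hqR : (2:ℝ) ≤ (q:ℝ) := by exact_mod_cast hq
  have hk1R : (1:ℝ) ≤ (k:ℝ) := by linarith
  -- choose t minimal with (9/4)^t > 2q
  have hex : ∃ t : ℕ, (2 * (q:ℚ)) < (9/4) ^ t := ⟨q, HeavyAux.pow94_gt hq⟩
  obtain ⟨t, htdef⟩ : ∃ t, t = Nat.find hex := ⟨_, rfl⟩
  have htspec : (2 * (q:ℚ)) < (9/4) ^ t := htdef ▸ Nat.find_spec hex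
  have htq : t ≤ q := htdef ▸ Nat.find_le (HeavyAux.pow94_gt hq)
  have hqQ : (2:ℚ) ≤ (q:ℚ) := by exact_mod_cast hq
  have ht1 : 1 ≤ t := by
    rcases Nat.eq_zero_or_pos t with h0 | h
    · exfalso
      rw [h0, pow_zero] at htspec
      linarith
    · exact h
  have htmin : ((9:ℚ)/4) ^ (t - 1) ≤ 2 * (q:ℚ) := by
    have h1 : t - 1 < Nat.find hex := by omega
    have := Nat.find_min hex h1
    exact le_of_not_gt this
  have htminR : ((9:ℝ)/4) ^ (t - 1) ≤ 2 * (q:ℝ) := by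
    have := (Rat.cast_le (K := ℝ)).mpr htmin
    push_cast at this
    exact this
  -- m
  obtain ⟨m, hmdef⟩ : ∃ m, m = 2 * k * t := ⟨_, rfl⟩
  have hm1 : 1 ≤ m := by
    have : 2 * 2 * 1 ≤ 2 * k * t := Nat.mul_le_mul (Nat.mul_le_mul (le_refl 2) hk) ht1
    omega
  have hmd2 : 2 * m ≤ d := by
    have h1 : 2 * k * t ≤ 2 * k * q := Nat.mul_le_mul_left (2*k) htq
    have h2 : 2 * (2 * k * q) = 4 * k * q := by ring
    omega
  have hmd : m ≤ d := by omega
  -- growth of (1+1/(2k))^m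
  have hgrowth : 2 * (q:ℝ) < (1 + 1/(2*(k:ℝ))) ^ m := by
    have h94 : ((9:ℝ)/4) ≤ (1 + 1/(2*(k:ℝ))) ^ (2*k) := HeavyAux.one_add_pow_2k hk
    have hQR : 2 * (q:ℝ) < ((9:ℝ)/4) ^ t := by
      have h0 := (Rat.cast_lt (K := ℝ)).mpr htspec
      push_cast at h0
      exact h0
    calc 2 * (q:ℝ) < ((9:ℝ)/4) ^ t := hQR
      _ ≤ ((1 + 1/(2*(k:ℝ))) ^ (2*k)) ^ t := pow_le_pow_left₀ (by norm_num) h94 t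
      _ = (1 + 1/(2*(k:ℝ))) ^ m := by rw [← pow_mul, hmdef]
  -- existence of a good descendant for each heavy prefix
  have hspec : ∀ x : (Σ h : ℕ, Fin h → Fin k), x.1 ≤ d - m →
      x.2 ∈ HeavyAux.Hset k d q A x.1 →
      ∃ v : Vtx k d, ∃ hle : x.1 ≤ (v.1 : ℕ), (v.1 : ℕ) < x.1 + m ∧
        HeavyAux.good k d q A (v.1 : ℕ) v.2 ∧
        ∀ i : Fin x.1, v.2 (Fin.castLE hle i) = x.2 i := by
    rintro ⟨h, p⟩ hhm hp
    have hhm' : h ≤ d - m := hhm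
    simp only [HeavyAux.Hset, Finset.mem_filter] at hp
    have hheavyN : k ^ (d - h) ≤ 2 * q * HeavyAux.cnt k d A h p := hp.2
    have hheavyR : (k:ℝ) ^ (d - h) ≤ 2 * q * (HeavyAux.cnt k d A h p : ℝ) := by
      have h0 : ((k ^ (d-h) : ℕ) : ℝ) ≤ ((2 * q * HeavyAux.cnt k d A h p : ℕ) : ℝ) := by
        exact_mod_cast hheavyN
      push_cast at h0
      linarith
    have hcntpos : (0:ℝ) < (HeavyAux.cnt k d A h p : ℝ) := by
      by_contra hc
      push_neg at hc
      have h1 : (0:ℝ) < (k:ℝ) ^ (d - h) := by positivity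
      nlinarith
    have hgrowR : (k:ℝ) ^ (d - h) < (HeavyAux.cnt k d A h p : ℝ) * (1 + 1/(2*(k:ℝ))) ^ m := by
      calc (k:ℝ) ^ (d - h) ≤ 2 * q * (HeavyAux.cnt k d A h p : ℝ) := hheavyR
        _ = (HeavyAux.cnt k d A h p : ℝ) * (2 * q) := by ring
        _ < (HeavyAux.cnt k d A h p : ℝ) * (1 + 1/(2*(k:ℝ))) ^ m :=
            mul_lt_mul_of_pos_left hgrowth hcntpos
    have hsm : h + m ≤ d := by
      clear hp hheavyN hheavyR hcntpos hgrowR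
      omega

    obtain ⟨h', hh, hd', p', hlt', hext, hgood⟩ :=
      HeavyAux.walk hk (by omega) m h hsm p hheavyR hgrowR
    exact ⟨⟨⟨h', by omega⟩, p'⟩, hh, hlt', hgood, hext⟩
  -- the assignment map
  have hspec' : ∀ x : (Σ h : ℕ, Fin h → Fin k), ∃ v : Vtx k d,
      x.1 ≤ d - m → x.2 ∈ HeavyAux.Hset k d q A x.1 →
      ∃ hle : x.1 ≤ (v.1 : ℕ), (v.1 : ℕ) < x.1 + m ∧
        HeavyAux.good k d q A (v.1 : ℕ) v.2 ∧
        ∀ i : Fin x.1, v.2 (Fin.castLE hle i) = x.2 i := by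
    intro x
    by_cases hx1 : x.1 ≤ d - m
    · by_cases hx2 : x.2 ∈ HeavyAux.Hset k d q A x.1
      · obtain ⟨v, hv⟩ := hspec x hx1 hx2
        exact ⟨v, fun _ _ => hv⟩
      · exact ⟨⟨⟨0, Nat.succ_pos d⟩, fun i => i.elim0⟩, fun _ h2 => absurd h2 hx2⟩
    · exact ⟨⟨⟨0, Nat.succ_pos d⟩, fun i => i.elim0⟩, fun h1 _ => absurd h1 hx1⟩
  choose Φ hPhispec using hspec'
  set S : Finset (Σ h : ℕ, Fin h → Fin k) :=
    (Finset.range (d - m + 1)).sigma (fun h => HeavyAux.Hset k d q A h) with hSdef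
  set F : Finset (Vtx k d) := S.image Φ with hFdef
  have hSmem : ∀ x ∈ S, x.1 ≤ d - m ∧ x.2 ∈ HeavyAux.Hset k d q A x.1 := by
    intro x hx
    rw [hSdef, Finset.mem_sigma, Finset.mem_range] at hx
    exact ⟨by omega, hx.2⟩
  refine ⟨F, ?_, ?_⟩
  · -- condition (1)
    intro v hv
    rw [hFdef] at hv
    obtain ⟨x, hxS, rfl⟩ := Finset.mem_image.mp hv
    obtain ⟨hx1, hx2⟩ := hSmem x hxS
    obtain ⟨hle, hvm, hgood, _⟩ := hPhispec x hx1 hx2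
    have hvd : ((Φ x).1 : ℕ) < d := by omega
    refine ⟨hvd, fun c => ?_⟩
    rw [HeavyAux.frac_eq]
    have hgc := hgood c
    have hgcR : ((k:ℝ) ^ (d - (((Φ x).1 : ℕ) + 1))) ≤
        4 * q * (HeavyAux.cnt k d A (((Φ x).1 : ℕ) + 1) (Fin.snoc (Φ x).2 c) : ℝ) := by
      have h0 : ((k ^ (d - (((Φ x).1:ℕ)+1)) : ℕ) : ℝ) ≤
          ((4 * q * HeavyAux.cnt k d A (((Φ x).1:ℕ)+1) (Fin.snoc (Φ x).2 c) : ℕ) : ℝ) := by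
        exact_mod_cast hgc
      push_cast at h0
      linarith
    rw [div_le_div_iff₀ (by positivity) (by positivity)]
    calc (1:ℝ) * (k:ℝ) ^ (d - (((Φ x).1:ℕ)+1))
        = (k:ℝ) ^ (d - (((Φ x).1:ℕ)+1)) := by ring
      _ ≤ 4 * q * (HeavyAux.cnt k d A (((Φ x).1:ℕ)+1) (Fin.snoc (Φ x).2 c) : ℝ) := hgcR
      _ = (HeavyAux.cnt k d A (((Φ x).1:ℕ)+1) (Fin.snoc (Φ x).2 c) : ℝ) * (4 * q) := by ring
  · -- condition (2)
    have hw : ∀ v : Vtx k d, (0:ℝ) ≤ (k:ℝ) ^ (d - (v.1 : ℕ)) := fun v => by positivity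
    have hmaps : ∀ x ∈ S, Φ x ∈ F := by
      intro x hx
      rw [hFdef]
      exact Finset.mem_image_of_mem Φ hx
    have hfiber : ∀ v ∈ F, (S.filter (fun x => Φ x = v)).card ≤ m := by
      intro v _
      have hsub : ∀ x ∈ S.filter (fun x => Φ x = v),
          x.1 ∈ Finset.Icc ((v.1 : ℕ) + 1 - m) ((v.1 : ℕ)) := by
        intro x hx
        rw [Finset.mem_filter] at hx
        obtain ⟨hxS, hxv⟩ := hx
        obtain ⟨hx1, hx2⟩ := hSmem x hxS
        have hQx := hPhispec x hx1 hx2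
        rw [hxv] at hQx
        obtain ⟨hle, hvm, _, _⟩ := hQx
        rw [Finset.mem_Icc]
        omega
      have hinj : Set.InjOn (fun x : (Σ h : ℕ, Fin h → Fin k) => x.1)
          ((S.filter (fun x => Φ x = v)) : Finset (Σ h : ℕ, Fin h → Fin k)) := by
        intro x hx y hy hxy
        simp only [Finset.coe_filter, Set.mem_setOf_eq] at hx hy
        obtain ⟨hxS, hxv⟩ := hx
        obtain ⟨hyS, hyv⟩ := hy
        obtain ⟨hx1, hx2⟩ := hSmem x hxS
        obtain ⟨hy1, hy2⟩ := hSmem y hyS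
        have hQx := hPhispec x hx1 hx2
        rw [hxv] at hQx
        have hQy := hPhispec y hy1 hy2
        rw [hyv] at hQy
        obtain ⟨hleX, _, _, hextX⟩ := hQx
        obtain ⟨hleY, _, _, hextY⟩ := hQy
        obtain ⟨hx0, px⟩ := x
        obtain ⟨hy0, py⟩ := y
        simp only at hxy
        subst hxy
        have hpq : px = py := by
          funext i
          exact (hextX i).symm.trans (hextY i)
        rw [hpq]
      calc (S.filter (fun x => Φ x = v)).card
          ≤ (Finset.Icc ((v.1 : ℕ) + 1 - m) ((v.1 : ℕ))).card :=
            Finset.card_le_card_of_injOn _ hsub hinj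
        _ ≤ m := by rw [Nat.card_Icc]; omega
    have hstepA : ∑ x ∈ S, (k:ℝ) ^ (d - ((Φ x).1 : ℕ)) ≤
        (m:ℝ) * ∑ v ∈ F, (k:ℝ) ^ (d - (v.1 : ℕ)) := by
      rw [← Finset.sum_fiberwise_of_maps_to' hmaps
        (fun v : Vtx k d => (k:ℝ) ^ (d - (v.1 : ℕ)))]
      rw [Finset.mul_sum]
      apply Finset.sum_le_sum
      intro v hv
      rw [Finset.sum_const, nsmul_eq_mul]
      apply mul_le_mul_of_nonneg_right _ (hw v)
      exact_mod_cast hfiber v hv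
    have hstepB : ((d - m + 1 : ℕ) : ℝ) * ((k:ℝ) ^ d / (2 * q * (k:ℝ) ^ (m-1))) ≤
        ∑ x ∈ S, (k:ℝ) ^ (d - ((Φ x).1 : ℕ)) := by
      rw [hSdef, Finset.sum_sigma]
      have hper : ∀ h ∈ Finset.range (d - m + 1),
          (k:ℝ) ^ d / (2 * q * (k:ℝ) ^ (m-1)) ≤
          ∑ p ∈ HeavyAux.Hset k d q A h, (k:ℝ) ^ (d - ((Φ ⟨h, p⟩).1 : ℕ)) := by
        intro h hh
        rw [Finset.mem_range] at hh
        have hhdm : h ≤ d - m := by omega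
        have hhd : h ≤ d := by omega
        have hterm : ∀ p ∈ HeavyAux.Hset k d q A h,
            (k:ℝ) ^ (d - (h + m - 1)) ≤ (k:ℝ) ^ (d - ((Φ ⟨h, p⟩).1 : ℕ)) := by
          intro p hp
          obtain ⟨hle, hvm, _, _⟩ := hPhispec ⟨h, p⟩ hhdm hp
          have hvm' : ((Φ ⟨h, p⟩).1 : ℕ) < h + m := hvm
          apply pow_le_pow_right₀ hk1R
          omega
        have hHc := HeavyAux.Hcard (by omega) (by omega) h hhd hA
        have hsplit : (k:ℝ) ^ (d - h) = (k:ℝ) ^ (d - (h + m - 1)) * (k:ℝ) ^ (m - 1) := by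
          rw [← pow_add]
          congr 1
          omega
        have hkey : (k:ℝ) ^ d / (2 * q * (k:ℝ) ^ (m-1)) ≤
            ((HeavyAux.Hset k d q A h).card : ℝ) * (k:ℝ) ^ (d - (h + m - 1)) := by
          rw [div_le_iff₀ (by positivity)]
          calc (k:ℝ) ^ d ≤ 2 * q * (((HeavyAux.Hset k d q A h).card : ℝ) * (k:ℝ) ^ (d - h)) := hHc
            _ = ((HeavyAux.Hset k d q A h).card : ℝ) * (k:ℝ) ^ (d - (h + m - 1)) *
                (2 * q * (k:ℝ) ^ (m-1)) := by rw [hsplit]; ring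
        calc (k:ℝ) ^ d / (2 * q * (k:ℝ) ^ (m-1))
            ≤ ((HeavyAux.Hset k d q A h).card : ℝ) * (k:ℝ) ^ (d - (h + m - 1)) := hkey
          _ ≤ ∑ p ∈ HeavyAux.Hset k d q A h, (k:ℝ) ^ (d - ((Φ ⟨h, p⟩).1 : ℕ)) := by
              rw [← nsmul_eq_mul]
              exact Finset.card_nsmul_le_sum _ _ _ hterm
      calc ((d - m + 1 : ℕ) : ℝ) * ((k:ℝ) ^ d / (2 * q * (k:ℝ) ^ (m-1)))
          = ∑ _h ∈ Finset.range (d - m + 1), (k:ℝ) ^ d / (2 * q * (k:ℝ) ^ (m-1)) := by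
            rw [Finset.sum_const, Finset.card_range, nsmul_eq_mul]
        _ ≤ _ := Finset.sum_le_sum hper
    -- combine
    have hnum := HeavyAux.final_numeric hk hq ht1 htq htminR
    rw [← hmdef] at hnum
    have hmR1 : (1:ℝ) ≤ (m:ℝ) := by exact_mod_cast hm1
    have hKd : (0:ℝ) < (k:ℝ) ^ d := by positivity
    have hkm1 : (0:ℝ) < (k:ℝ) ^ (m-1) := by positivity
    have hq0 : (0:ℝ) < (q:ℝ) := by linarith
    have hFsum : ((d - m + 1 : ℕ) : ℝ) * ((k:ℝ) ^ d / (2 * q * (k:ℝ) ^ (m-1))) ≤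
        (m:ℝ) * ∑ v ∈ F, (k:ℝ) ^ (d - (v.1 : ℕ)) := le_trans hstepB hstepA
    set W : ℝ := ∑ v ∈ F, (k:ℝ) ^ (d - (v.1 : ℕ)) with hWdef
    have hW0 : 0 ≤ W := Finset.sum_nonneg (fun v _ => hw v)
    have hDm : (d:ℝ)/2 ≤ ((d - m + 1 : ℕ) : ℝ) := by
      have h1 : m ≤ d := hmd
      have h2 : ((d - m + 1 : ℕ) : ℝ) = (d:ℝ) - (m:ℝ) + 1 := by
        push_cast [Nat.cast_sub h1]
        ring
      rw [h2]
      have h3 : (m:ℝ) + (m:ℝ) ≤ (d:ℝ) := by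
        have : m + m ≤ d := by omega
        exact_mod_cast this
      linarith
    -- target chain
    have hE := hnum
    have hP0 : (0:ℝ) < 4 * q * (m:ℝ) * (k:ℝ) ^ (m-1) := by positivity
    have hR0 : (0:ℝ) < (4 * (q:ℝ)) ^ (3 * (k:ℝ) * Real.logb 2 (k:ℝ)) :=
      Real.rpow_pos_of_pos (by linarith) _
    have h1 : ((d - m + 1 : ℕ) : ℝ) * (k:ℝ) ^ d ≤
        ((m:ℝ) * W) * (2 * q * (k:ℝ) ^ (m-1)) := by
      rw [← mul_div_assoc] at hFsum
      exact (div_le_iff₀ (by positivity)).mp hFsum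
    have hW2 : ((d - m + 1 : ℕ) : ℝ) * (k:ℝ) ^ d / (2 * q * (k:ℝ) ^ (m-1) * (m:ℝ)) ≤ W := by
      rw [div_le_iff₀ (by positivity)]
      calc ((d - m + 1 : ℕ) : ℝ) * (k:ℝ) ^ d ≤ ((m:ℝ) * W) * (2 * q * (k:ℝ) ^ (m-1)) := h1
        _ = W * (2 * q * (k:ℝ) ^ (m-1) * (m:ℝ)) := by ring
    have htarget : (d:ℝ) * (k:ℝ) ^ d * (4 * (q:ℝ)) ^ (-(3 * (k:ℝ) * Real.logb 2 (k:ℝ))) ≤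
        ((d - m + 1 : ℕ) : ℝ) * (k:ℝ) ^ d / (2 * q * (k:ℝ) ^ (m-1) * (m:ℝ)) := by
      rw [Real.rpow_neg (by linarith), ← div_eq_mul_inv]
      rw [div_le_div_iff₀ hR0 (by positivity)]
      have h2 : (d:ℝ)/2 * ((k:ℝ)^d * (4 * q * (m:ℝ) * (k:ℝ)^(m-1))) ≤
          ((d - m + 1 : ℕ) : ℝ) * ((k:ℝ)^d * (4 * q * (m:ℝ) * (k:ℝ)^(m-1))) :=
        mul_le_mul_of_nonneg_right hDm (by positivity)
      have h3 : ((d - m + 1 : ℕ) : ℝ) * ((k:ℝ)^d * (4 * q * (m:ℝ) * (k:ℝ)^(m-1))) ≤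
          ((d - m + 1 : ℕ) : ℝ) * ((k:ℝ)^d *
            ((4 * (q:ℝ)) ^ (3 * (k:ℝ) * Real.logb 2 (k:ℝ)))) := by
        apply mul_le_mul_of_nonneg_left _ (by positivity)
        exact mul_le_mul_of_nonneg_left hnum (by positivity)
      calc (d:ℝ) * (k:ℝ)^d * (2 * q * (k:ℝ)^(m-1) * (m:ℝ))
          = (d:ℝ)/2 * ((k:ℝ)^d * (4 * q * (m:ℝ) * (k:ℝ)^(m-1))) := by ring
        _ ≤ ((d - m + 1 : ℕ) : ℝ) * ((k:ℝ)^d * (4 * q * (m:ℝ) * (k:ℝ)^(m-1))) := h2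
        _ ≤ ((d - m + 1 : ℕ) : ℝ) * ((k:ℝ)^d *
              ((4 * (q:ℝ)) ^ (3 * (k:ℝ) * Real.logb 2 (k:ℝ)))) := h3
        _ = ((d - m + 1 : ℕ) : ℝ) * (k:ℝ)^d *
              ((4 * (q:ℝ)) ^ (3 * (k:ℝ) * Real.logb 2 (k:ℝ))) := by ring
    exact le_trans htarget hW2
end
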